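/- arXiv:math/0601502 — 7 statements merged into one kernel-verified Lean document; each statement's English description precedes it below -/
import Mathlib

section
/- Let V be a finite-dimensional vector space over Z_p (p odd) with a possibly singular symmetric bilinear form, n = dim V and r = dim(rad V). Then the group Ô(V) of isometries acting trivially on rad V is isomorphic to a semidirect product of (Z_p)^{r(n−r)} by O(V / rad V). -/
/-! An automorphism `g` fixing `rad` pointwise induces `ḡ` on `V ⧸ rad`; since the form factors
through the quotient, `g` is an isometry iff `ḡ` is. So `Ô(V)` is the preimage of `O(V ⧸ rad)`
in the group of automorphisms fixing `rad` pointwise. The kernel of `g ↦ ḡ` consists of the shears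
`x ↦ x + f (x mod rad)` with `f : V ⧸ rad →ₗ rad`, which compose by adding the `f`'s, and a linear
section `σ` of `V → V ⧸ rad` splits `g ↦ ḡ` by `h ↦ (x ↦ x + σ (h x̄ - x̄))`. -/

theorem LinearEquiv.mem_fixingSubgroup_iff {R V : Type*} [Semiring R] [AddCommMonoid V]
    [Module R V] {s : Set V} {g : V ≃ₗ[R] V} :
    g ∈ fixingSubgroup (V ≃ₗ[R] V) s ↔ ∀ x ∈ s, g x = x := by
  simp [_root_.mem_fixingSubgroup_iff, LinearEquiv.smul_def]

namespace Submodule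

variable {R V : Type*} [Ring R] [AddCommGroup V] [Module R V] (U : Submodule R V)

@[simp]
theorem Quotient.mk_coe_eq_zero (y : U) : (Quotient.mk (y : V) : V ⧸ U) = 0 :=
  (Quotient.mk_eq_zero U).2 y.2

def shear (f : (V ⧸ U) →ₗ[R] U) : V ≃ₗ[R] V :=
  LinearEquiv.ofLinearMap (LinearMap.id + U.subtype ∘ₗ f ∘ₗ U.mkQ)
    (LinearMap.id - U.subtype ∘ₗ f ∘ₗ U.mkQ) (by ext; simp) (by ext; simp)

variable {U}

theorem shear_apply (f : (V ⧸ U) →ₗ[R] U) (x : V) : U.shear f x = x + f (Quotient.mk x) := rfl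

@[simp]
theorem mk_shear (f : (V ⧸ U) →ₗ[R] U) (x : V) :
    (Quotient.mk (U.shear f x) : V ⧸ U) = Quotient.mk x := by
  simp [shear_apply]

theorem shear_apply_of_mem (f : (V ⧸ U) →ₗ[R] U) {x : V} (hx : x ∈ U) :
    U.shear f x = x := by
  simp [shear_apply, (Quotient.mk_eq_zero U).2 hx]

theorem shear_add (f g : (V ⧸ U) →ₗ[R] U) : U.shear (f + g) = U.shear f * U.shear g := by
  ext x
  simp only [LinearEquiv.mul_apply, shear_apply, LinearMap.add_apply, coe_add,
    Quotient.mk_add, Quotient.mk_coe_eq_zero, add_zero]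
  abel

theorem shear_injective : Function.Injective U.shear := by
  intro f g hfg
  ext x
  simpa [shear_apply] using LinearEquiv.congr_fun hfg x

theorem exists_shear_eq {g : V ≃ₗ[R] V} (hU : ∀ x ∈ U, g x = x)
    (hq : ∀ x, (Quotient.mk (g x) : V ⧸ U) = Quotient.mk x) : ∃ f, U.shear f = g := by
  let F : V →ₗ[R] U := LinearMap.codRestrict U (g.toLinearMap - LinearMap.id)
    fun x => (Quotient.eq U).1 (hq x)
  refine ⟨U.liftQ F fun x hx => ?_, ?_⟩
  · simp [F, hU x hx]
  · ext x
    simp [shear_apply, F]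

theorem map_eq_self_of_forall_apply_eq {f : V →ₗ[R] V} (hU : ∀ x ∈ U, f x = x) :
    U.map f = U := by
  ext x
  refine ⟨?_, fun hx => ⟨x, hx, hU x hx⟩⟩
  rintro ⟨y, hy, rfl⟩
  simpa [hU y hy] using hy

variable (U) in
def quotientAutHom :
    fixingSubgroup (V ≃ₗ[R] V) (U : Set V) →* (V ⧸ U) ≃ₗ[R] (V ⧸ U) :=
  MonoidHom.mk' (fun g => Quotient.equiv U U g
      (map_eq_self_of_forall_apply_eq (LinearEquiv.mem_fixingSubgroup_iff.1 g.2)))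
    fun g h => by ext q; obtain ⟨x, rfl⟩ := Quotient.mk_surjective U q; rfl

@[simp]
theorem quotientAutHom_mk (g : fixingSubgroup (V ≃ₗ[R] V) (U : Set V)) (x : V) :
    U.quotientAutHom g (Quotient.mk x) = Quotient.mk ((g : V ≃ₗ[R] V) x) := rfl

variable (U) in
def shearHom :
    Multiplicative ((V ⧸ U) →ₗ[R] U) →* fixingSubgroup (V ≃ₗ[R] V) (U : Set V) :=
  MonoidHom.mk' (fun f => ⟨U.shear f.toAdd,
      LinearEquiv.mem_fixingSubgroup_iff.2 fun _ hx => shear_apply_of_mem _ hx⟩)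
    fun f g => Subtype.ext (shear_add f.toAdd g.toAdd)

theorem shearHom_injective : Function.Injective U.shearHom :=
  fun _ _ hfg => shear_injective (congrArg Subtype.val hfg)

theorem range_shearHom : U.shearHom.range = U.quotientAutHom.ker := by
  ext g
  rw [MonoidHom.mem_range, MonoidHom.mem_ker, LinearEquiv.ext_iff]
  constructor
  · rintro ⟨f, rfl⟩ q
    obtain ⟨x, rfl⟩ := Quotient.mk_surjective U q
    exact mk_shear _ x
  · intro hg
    obtain ⟨f, hf⟩ := exists_shear_eq (LinearEquiv.mem_fixingSubgroup_iff.1 g.2)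
      fun x => hg (Quotient.mk x)
    exact ⟨Multiplicative.ofAdd f, Subtype.ext hf⟩

@[simp]
theorem quotientAutHom_shearHom (f : Multiplicative ((V ⧸ U) →ₗ[R] U)) :
    U.quotientAutHom (U.shearHom f) = 1 := by
  rw [← MonoidHom.mem_ker, ← range_shearHom]
  exact ⟨f, rfl⟩

variable {σ : (V ⧸ U) →ₗ[R] V} (hσ : ∀ q, (Quotient.mk (σ q) : V ⧸ U) = q)

def liftQuotientAut (h : (V ⧸ U) ≃ₗ[R] (V ⧸ U)) : V ≃ₗ[R] V :=
  LinearEquiv.ofLinearMap (LinearMap.id + σ ∘ₗ (h.toLinearMap - LinearMap.id) ∘ₗ U.mkQ)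
    (LinearMap.id + σ ∘ₗ (h.symm.toLinearMap - LinearMap.id) ∘ₗ U.mkQ)
    (by ext x; simp [hσ]; abel) (by ext x; simp [hσ]; abel)

theorem liftQuotientAut_apply (h : (V ⧸ U) ≃ₗ[R] (V ⧸ U)) (x : V) :
    liftQuotientAut hσ h x = x + σ (h (Quotient.mk x) - Quotient.mk x) := rfl

@[simp]
theorem mk_liftQuotientAut (h : (V ⧸ U) ≃ₗ[R] (V ⧸ U)) (x : V) :
    (Quotient.mk (liftQuotientAut hσ h x) : V ⧸ U) = h (Quotient.mk x) := by
  simp [liftQuotientAut_apply, hσ]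

theorem liftQuotientAut_apply_of_mem (h : (V ⧸ U) ≃ₗ[R] (V ⧸ U)) {x : V} (hx : x ∈ U) :
    liftQuotientAut hσ h x = x := by
  simp [liftQuotientAut_apply, (Quotient.mk_eq_zero U).2 hx]

theorem liftQuotientAut_mul (h₁ h₂ : (V ⧸ U) ≃ₗ[R] (V ⧸ U)) :
    liftQuotientAut hσ (h₁ * h₂) = liftQuotientAut hσ h₁ * liftQuotientAut hσ h₂ := by
  ext x
  rw [LinearEquiv.mul_apply, liftQuotientAut_apply hσ h₁, mk_liftQuotientAut,
    liftQuotientAut_apply, liftQuotientAut_apply, LinearEquiv.mul_apply]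
  simp only [map_sub]
  abel

def liftQuotientAutHom :
    ((V ⧸ U) ≃ₗ[R] (V ⧸ U)) →* fixingSubgroup (V ≃ₗ[R] V) (U : Set V) :=
  MonoidHom.mk' (fun h => ⟨liftQuotientAut hσ h,
      LinearEquiv.mem_fixingSubgroup_iff.2 fun _ hx => liftQuotientAut_apply_of_mem hσ h hx⟩)
    fun h₁ h₂ => Subtype.ext (liftQuotientAut_mul hσ h₁ h₂)

@[simp]
theorem quotientAutHom_liftQuotientAutHom (h : (V ⧸ U) ≃ₗ[R] (V ⧸ U)) :
    U.quotientAutHom (liftQuotientAutHom hσ h) = h := by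
  ext q
  obtain ⟨x, rfl⟩ := Quotient.mk_surjective U q
  exact mk_liftQuotientAut hσ h x

section PreimageExtension

variable {K V : Type*} [DivisionRing K] [AddCommGroup V] [Module K V] {U : Submodule K V}
  {G : Subgroup (V ≃ₗ[K] V)} {H : Subgroup ((V ⧸ U) ≃ₗ[K] (V ⧸ U))}
  (hle : G ≤ fixingSubgroup (V ≃ₗ[K] V) (U : Set V))
  (hG : ∀ g : fixingSubgroup (V ≃ₗ[K] V) (U : Set V),
    (g : V ≃ₗ[K] V) ∈ G ↔ U.quotientAutHom g ∈ H)

def preimageExtension : GroupExtension (Multiplicative ((V ⧸ U) →ₗ[K] U)) G H where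
  inl := (Subgroup.subtype _ |>.comp U.shearHom).codRestrict G fun f =>
    (hG _).2 (by rw [quotientAutHom_shearHom]; exact H.one_mem)
  rightHom := (U.quotientAutHom.comp (Subgroup.inclusion hle)).codRestrict H fun g => (hG _).1 g.2
  inl_injective _ _ h :=
    shearHom_injective (Subtype.ext (congrArg (fun g : G => (g : V ≃ₗ[K] V)) h))
  range_inl_eq_ker_rightHom := by
    ext g
    have key := SetLike.ext_iff.1 range_shearHom ⟨g, hle g.2⟩
    simp only [MonoidHom.mem_range, MonoidHom.mem_ker, Subtype.ext_iff] at key ⊢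
    exact key
  rightHom_surjective h := by
    obtain ⟨σ, hσ⟩ := U.mkQ.exists_rightInverse_of_surjective U.range_mkQ
    have hσ' : ∀ q, (Quotient.mk (σ q) : V ⧸ U) = q := LinearMap.congr_fun hσ
    exact ⟨⟨liftQuotientAutHom hσ' h, (hG _).2 (by simp)⟩,
      Subtype.ext (quotientAutHom_liftQuotientAutHom hσ' h)⟩

def preimageSplitting {σ : (V ⧸ U) →ₗ[K] V}
    (hσ : ∀ q, (Quotient.mk (σ q) : V ⧸ U) = q) : (preimageExtension hle hG).Splitting where
  toMonoidHom :=
    ((Subgroup.subtype _).comp ((liftQuotientAutHom hσ).comp H.subtype)).codRestrict G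
      fun h => (hG _).2 (by simp)
  rightInverse_rightHom h := Subtype.ext (quotientAutHom_liftQuotientAutHom hσ h)

end PreimageExtension

theorem isometry_iff_quotientAutHom_isometry {R V M : Type*} [CommRing R]
    [AddCommGroup V] [Module R V] [AddCommGroup M] [Module R M] {U : Submodule R V}
    {B : V →ₗ[R] V →ₗ[R] M} {B' : (V ⧸ U) →ₗ[R] (V ⧸ U) →ₗ[R] M}
    (hB' : ∀ x y, B' (Quotient.mk x) (Quotient.mk y) = B x y)
    (g : fixingSubgroup (V ≃ₗ[R] V) (U : Set V)) :
    (∀ x y, B ((g : V ≃ₗ[R] V) x) ((g : V ≃ₗ[R] V) y) = B x y) ↔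
      ∀ a b, B' (U.quotientAutHom g a) (U.quotientAutHom g b) = B' a b := by
  simp only [(Quotient.mk_surjective U).forall, quotientAutHom_mk, hB']

end Submodule

open Submodule

theorem Ohat_iso_semidirectProduct_general (p : ℕ) [hp : Fact p.Prime]
    (V : Type*) [AddCommGroup V] [Module (ZMod p) V] [FiniteDimensional (ZMod p) V]
    (B : V →ₗ[ZMod p] V →ₗ[ZMod p] ZMod p)
    (rad : Submodule (ZMod p) V)
    (n r : ℕ) (hn : n = Module.finrank (ZMod p) V) (hr : r = Module.finrank (ZMod p) rad)
    (Ohat : Subgroup (V ≃ₗ[ZMod p] V))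
    (hOhat : ∀ g, g ∈ Ohat ↔ ((∀ x y, B (g x) (g y) = B x y) ∧ ∀ x ∈ rad, g x = x))
    (B' : (V ⧸ rad) →ₗ[ZMod p] (V ⧸ rad) →ₗ[ZMod p] ZMod p)
    (hB' : ∀ x y : V, B' (Submodule.Quotient.mk x) (Submodule.Quotient.mk y) = B x y)
    (OQ : Subgroup ((V ⧸ rad) ≃ₗ[ZMod p] (V ⧸ rad)))
    (hOQ : ∀ h, h ∈ OQ ↔ ∀ x y : V ⧸ rad, B' (h x) (h y) = B' x y) :
    ∃ φ : OQ →* MulAut (Multiplicative (Fin (r * (n - r)) → ZMod p)),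
      Nonempty (Ohat ≃* (Multiplicative (Fin (r * (n - r)) → ZMod p)) ⋊[φ] OQ) := by
  obtain ⟨σ, hσ⟩ := rad.mkQ.exists_rightInverse_of_surjective rad.range_mkQ
  have hle : Ohat ≤ fixingSubgroup _ (rad : Set V) := fun g hg =>
    LinearEquiv.mem_fixingSubgroup_iff.2 ((hOhat g).1 hg).2
  have hG (g : fixingSubgroup (V ≃ₗ[ZMod p] V) (rad : Set V)) :
      (g : V ≃ₗ[ZMod p] V) ∈ Ohat ↔ rad.quotientAutHom g ∈ OQ := by
    rw [hOhat, hOQ, ← isometry_iff_quotientAutHom_isometry hB']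
    exact and_iff_left (LinearEquiv.mem_fixingSubgroup_iff.1 g.2)
  have hdim : Module.finrank (ZMod p) ((V ⧸ rad) →ₗ[ZMod p] rad) =
      Module.finrank (ZMod p) (Fin (r * (n - r)) → ZMod p) := by
    rw [Module.finrank_linearMap, Submodule.finrank_quotient, Module.finrank_fin_fun, hn, hr,
      mul_comm]
  let e := AddEquiv.toMultiplicative (LinearEquiv.ofFinrankEq _ _ hdim).toAddEquiv
  let s := preimageSplitting hle hG (LinearMap.congr_fun hσ)
  exact ⟨_, ⟨s.semidirectProductMulEquiv.symm.trans
    (SemidirectProduct.congr' e (MulEquiv.refl OQ))⟩⟩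

/-- For `V` over `ZMod p` with a possibly singular symmetric bilinear form, `n = dim V`,
`r = dim rad V`, the group `Ô(V)` of isometries acting trivially on the radical is
isomorphic to a semidirect product of `(ZMod p)^{r(n-r)}` by the orthogonal group of the
induced form on `V / rad V`. -/
theorem Ohat_iso_semidirectProduct (p : ℕ) [hp : Fact p.Prime] (hodd : p ≠ 2)
    (V : Type*) [AddCommGroup V] [Module (ZMod p) V] [FiniteDimensional (ZMod p) V]
    (B : V →ₗ[ZMod p] V →ₗ[ZMod p] ZMod p) (hsymm : ∀ x y, B x y = B y x)
    (rad : Submodule (ZMod p) V) (hrad : rad = LinearMap.BilinForm.orthogonal B ⊤)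
    (n r : ℕ) (hn : n = Module.finrank (ZMod p) V) (hr : r = Module.finrank (ZMod p) rad)
    (Ohat : Subgroup (V ≃ₗ[ZMod p] V))
    (hOhat : ∀ g, g ∈ Ohat ↔ ((∀ x y, B (g x) (g y) = B x y) ∧ ∀ x ∈ rad, g x = x))
    (B' : (V ⧸ rad) →ₗ[ZMod p] (V ⧸ rad) →ₗ[ZMod p] ZMod p)
    (hB' : ∀ x y : V, B' (Submodule.Quotient.mk x) (Submodule.Quotient.mk y) = B x y)
    (OQ : Subgroup ((V ⧸ rad) ≃ₗ[ZMod p] (V ⧸ rad)))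
    (hOQ : ∀ h, h ∈ OQ ↔ ∀ x y : V ⧸ rad, B' (h x) (h y) = B' x y) :
    ∃ φ : OQ →* MulAut (Multiplicative (Fin (r * (n - r)) → ZMod p)),
      Nonempty (Ohat ≃* (Multiplicative (Fin (r * (n - r)) → ZMod p)) ⋊[φ] OQ) :=
  Ohat_iso_semidirectProduct_general p (hp := hp) V B rad n r hn hr Ohat hOhat B' hB' OQ hOQ
end

section
/- Let V be a 2-dimensional vector space over Z_p (p an odd prime) with a symmetric bilinear form whose radical is 1-dimensional, spanned by a vector c, and let b be a vector with b·b ≠ 0 so that b, c is a basis of V. Then every element of Ô(V) (isometries acting trivially on rad V) is represented in the basis b, c by a matrix of the form [[±1, 0],[μ, 1]] with μ ∈ Z_p; in particular |Ô(V)| = 2p and Ô(V) is a dihedral group of order 2p. -/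
/-!
In the basis `b, c` the form is `B x y = x₀ y₀ B(b, b)`, because `c` spans the radical. An
endomorphism fixing `c` has matrix `[[ε, 0], [μ, 1]]` and multiplies `B` by `ε²`, so it is an
isometry exactly when `ε = ±1`. These matrices form the image of the faithful representation
`r i ↦ [[1, 0], [i, 1]]`, `sr i ↦ [[-1, 0], [i, 1]]` of `DihedralGroup p` over `ZMod p`
(faithful because `-1 ≠ 1` for odd `p`), and the matrix of an automorphism determines it.
-/

open Module

def signedShears (K : Type*) [Ring K] : Set (Matrix (Fin 2) (Fin 2) K) :=
  {M | M 0 1 = 0 ∧ M 1 1 = 1 ∧ (M 0 0 = 1 ∨ M 0 0 = -1)}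

namespace DihedralGroup

variable {n : ℕ}

def toMatrix : DihedralGroup n →* Matrix (Fin 2) (Fin 2) (ZMod n) where
  toFun
    | r i => !![1, 0; i, 1]
    | sr i => !![-1, 0; i, 1]
  map_one' := by
    rw [one_def]
    ext i j
    fin_cases i <;> fin_cases j <;> rfl
  map_mul' := by
    rintro (a | a) (b | b) <;> ext i j <;> fin_cases i <;> fin_cases j <;>
      simp [Matrix.mul_apply, Fin.sum_univ_two] <;> ring

theorem toMatrix_r (i : ZMod n) : toMatrix (r i) = !![1, 0; i, 1] := rfl

theorem toMatrix_sr (i : ZMod n) : toMatrix (sr i) = !![-1, 0; i, 1] := rfl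

theorem toMatrix_injective (h : (-1 : ZMod n) ≠ 1) : Function.Injective (toMatrix (n := n)) := by
  rintro (a | a) (b | b) hab
  all_goals
    have h00 := congrFun (congrFun hab 0) 0
    have h10 := congrFun (congrFun hab 1) 0
    simp only [toMatrix_r, toMatrix_sr, Matrix.of_apply, Matrix.cons_val', Matrix.cons_val_zero,
      Matrix.cons_val_one, Matrix.empty_val', Matrix.cons_val_fin_one] at h00 h10
  · rw [h10]
  · exact absurd h00.symm h
  · exact absurd h00 h
  · rw [h10]

theorem range_toMatrix : Set.range (toMatrix (n := n)) = signedShears (ZMod n) := by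
  ext M
  constructor
  · rintro ⟨a | a, rfl⟩ <;> simp [signedShears, toMatrix_r, toMatrix_sr]
  · rintro ⟨h01, h11, h00 | h00⟩
    · exact ⟨r (M 1 0), by rw [toMatrix_r, Matrix.eta_fin_two M, h00, h01, h11]; rfl⟩
    · exact ⟨sr (M 1 0), by rw [toMatrix_sr, Matrix.eta_fin_two M, h00, h01, h11]; rfl⟩

end DihedralGroup

theorem Subgroup.nonempty_mulEquiv_of_mem_iff_toMatrix_mem_range {ι K V G : Type*} [Fintype ι]
    [DecidableEq ι] [CommRing K] [AddCommGroup V] [Module K V] [Group G] (e : Basis ι K V)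
    {φ : G →* Matrix ι ι K} (hφ : Function.Injective φ) {H : Subgroup (V ≃ₗ[K] V)}
    (hH : ∀ g, g ∈ H ↔ LinearMap.toMatrix e e g ∈ Set.range φ) : Nonempty (H ≃* G) := by
  let ρ : G →* (V ≃ₗ[K] V) := (LinearMap.GeneralLinearGroup.generalLinearEquiv K V).toMonoidHom.comp
    ((Matrix.toLinAlgEquiv e : Matrix ι ι K →* Module.End K V).comp φ).toHomUnits
  have hρ (x : G) : LinearMap.toMatrix e e (ρ x) = φ x :=
    LinearMap.toMatrix_toLin e e (φ x)
  have hρ_inj : Function.Injective ρ := fun x y hxy => hφ (by rw [← hρ, ← hρ, hxy])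
  have hrange : ρ.range = H := by
    ext g
    rw [hH, MonoidHom.mem_range]
    constructor
    · rintro ⟨x, rfl⟩
      exact ⟨x, (hρ x).symm⟩
    · rintro ⟨x, hx⟩
      refine ⟨x, LinearEquiv.toLinearMap_injective ((LinearMap.toMatrix e e).injective ?_)⟩
      rw [hρ, hx]
  exact ⟨((MonoidHom.ofInjective hρ_inj).trans (MulEquiv.subgroupCongr hrange)).symm⟩

namespace LinearMap

variable {K V : Type*} [CommRing K] [AddCommGroup V] [Module K V] (e : Basis (Fin 2) K V)

theorem apply_basis_one_eq_iff_toMatrix (g : V →ₗ[K] V) :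
    g (e 1) = e 1 ↔ toMatrix e e g 0 1 = 0 ∧ toMatrix e e g 1 1 = 1 := by
  simp [e.ext_elem_iff, Fin.forall_fin_two, toMatrix_apply]

theorem toMatrix_mem_signedShears_iff (g : V →ₗ[K] V) :
    toMatrix e e g ∈ signedShears K ↔
      ∃ ε μ : K, (ε = 1 ∨ ε = -1) ∧ g (e 0) = ε • e 0 + μ • e 1 ∧ g (e 1) = e 1 := by
  rw [signedShears, Set.mem_ofPred_eq, ← and_assoc, ← apply_basis_one_eq_iff_toMatrix]
  constructor
  · rintro ⟨h1, h00⟩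
    refine ⟨_, toMatrix e e g 1 0, h00, ?_, h1⟩
    simpa only [Fin.sum_univ_two, toMatrix_apply] using (e.sum_repr (g (e 0))).symm
  · rintro ⟨ε, μ, hε, h0, h1⟩
    refine ⟨h1, ?_⟩
    simpa [toMatrix_apply, h0] using hε

namespace BilinForm

variable {B : LinearMap.BilinForm K V}

theorem apply_eq_repr_mul_repr_of_basis_one_isOrtho (h₁ : ∀ x, B x (e 1) = 0)
    (h₂ : ∀ x, B (e 1) x = 0) (x y : V) :
    B x y = e.repr x 0 * e.repr y 0 * B (e 0) (e 0) := by
  have hexp (z : V) : z = e.repr z 0 • e 0 + e.repr z 1 • e 1 := by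
    simpa only [Fin.sum_univ_two] using (e.sum_repr z).symm
  conv_lhs => rw [hexp x, hexp y]
  simp only [map_add, map_smul, LinearMap.add_apply, LinearMap.smul_apply, smul_eq_mul, h₁, h₂]
  ring

theorem apply_apply_eq_toMatrix_mul_self_mul (h₁ : ∀ x, B x (e 1) = 0)
    (h₂ : ∀ x, B (e 1) x = 0) (g : V →ₗ[K] V) (hg : LinearMap.toMatrix e e g 0 1 = 0)
    (x y : V) :
    B (g x) (g y) = LinearMap.toMatrix e e g 0 0 * LinearMap.toMatrix e e g 0 0 * B x y := by
  have hrepr (z : V) : e.repr (g z) 0 = LinearMap.toMatrix e e g 0 0 * e.repr z 0 := by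
    rw [← toMatrix_mulVec_repr e e g z]
    simp [Matrix.mulVec, dotProduct, Fin.sum_univ_two, hg]
  rw [apply_eq_repr_mul_repr_of_basis_one_isOrtho e h₁ h₂ (g x),
    apply_eq_repr_mul_repr_of_basis_one_isOrtho e h₁ h₂ x, hrepr, hrepr]
  ring

theorem isometry_fixing_span_iff_toMatrix_mem_signedShears [IsDomain K]
    (h₁ : ∀ x, B x (e 1) = 0) (h₂ : ∀ x, B (e 1) x = 0) (hb : B (e 0) (e 0) ≠ 0)
    (g : V →ₗ[K] V) :
    ((∀ x y, B (g x) (g y) = B x y) ∧ ∀ x ∈ K ∙ e 1, g x = x) ↔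
      LinearMap.toMatrix e e g ∈ signedShears K := by
  have hfix : (∀ x ∈ K ∙ e 1, g x = x) ↔ g (e 1) = e 1 := by
    refine ⟨fun h => h _ (Submodule.mem_span_singleton_self _), fun h x hx => ?_⟩
    obtain ⟨t, rfl⟩ := Submodule.mem_span_singleton.mp hx
    rw [map_smul, h]
  rw [hfix, apply_basis_one_eq_iff_toMatrix, signedShears, Set.mem_ofPred_eq,
    ← mul_self_eq_one_iff]
  constructor
  · rintro ⟨hiso, h01, h11⟩
    refine ⟨h01, h11, mul_right_cancel₀ hb ?_⟩
    rw [one_mul, ← apply_apply_eq_toMatrix_mul_self_mul e h₁ h₂ g h01, hiso]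
  · rintro ⟨h01, h11, h00⟩
    refine ⟨fun x y => ?_, h01, h11⟩
    rw [apply_apply_eq_toMatrix_mul_self_mul e h₁ h₂ g h01, h00, one_mul]

end BilinForm

end LinearMap

theorem Ohat_of_singular_plane_general (p : ℕ) [hp : Fact p.Prime] (hodd : p ≠ 2)
    (V : Type*) [AddCommGroup V] [Module (ZMod p) V]
    (B : V →ₗ[ZMod p] V →ₗ[ZMod p] ZMod p) (hsymm : ∀ x y, B x y = B y x)
    (b c : V) (hind : LinearIndependent (ZMod p) ![b, c])
    (hspan : Submodule.span (ZMod p) {b, c} = ⊤)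
    (hb : B b b ≠ 0)
    (hrad : LinearMap.BilinForm.orthogonal B ⊤ = Submodule.span (ZMod p) {c})
    (Ohat : Subgroup (V ≃ₗ[ZMod p] V))
    (hOhat : ∀ g, g ∈ Ohat ↔ ((∀ x y, B (g x) (g y) = B x y) ∧
      ∀ x ∈ Submodule.span (ZMod p) {c}, g x = x)) :
    (∀ g ∈ Ohat, ∃ ε μ : ZMod p, (ε = 1 ∨ ε = -1) ∧ g b = ε • b + μ • c ∧ g c = c) ∧
    Nat.card Ohat = 2 * p ∧ Nonempty (Ohat ≃* DihedralGroup p) := by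
  have : Fact (2 < p) := ⟨hp.out.two_le.lt_of_ne' hodd⟩
  let e : Basis (Fin 2) (ZMod p) V :=
    .mk hind (by rw [Matrix.range_cons_cons_empty, hspan])
  have he0 : e 0 = b := by simp [e]
  have he1 : e 1 = c := by simp [e]
  have hc₁ (x : V) : B x c = 0 := (hrad ▸ Submodule.mem_span_singleton_self c) x Submodule.mem_top
  have hc₂ (x : V) : B c x = 0 := (hsymm c x).trans (hc₁ x)
  have hmem (g : V ≃ₗ[ZMod p] V) : g ∈ Ohat ↔ LinearMap.toMatrix e e g ∈ signedShears (ZMod p) := by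
    rw [hOhat, ← LinearMap.BilinForm.isometry_fixing_span_iff_toMatrix_mem_signedShears e
      (he1 ▸ hc₁) (he1 ▸ hc₂) (he0 ▸ hb), he1]
    rfl
  obtain ⟨φ⟩ := Subgroup.nonempty_mulEquiv_of_mem_iff_toMatrix_mem_range e
    (DihedralGroup.toMatrix_injective ZMod.neg_one_ne_one) (by rwa [DihedralGroup.range_toMatrix])
  refine ⟨fun g hg => ?_, by rw [Nat.card_congr φ.toEquiv, DihedralGroup.nat_card], ⟨φ⟩⟩
  simpa only [he0, he1, LinearEquiv.coe_coe] using
    (LinearMap.toMatrix_mem_signedShears_iff e g).1 ((hmem g).1 hg)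

/-- For a 2-dimensional space over `ZMod p` with 1-dimensional radical spanned by `c` and
anisotropic `b` with `b, c` a basis, every element of `Ô(V)` has matrix `[[±1,0],[μ,1]]`
in the basis `b, c`; consequently `|Ô(V)| = 2p` and `Ô(V)` is dihedral of order `2p`. -/
theorem Ohat_of_singular_plane (p : ℕ) [hp : Fact p.Prime] (hodd : p ≠ 2)
    (V : Type*) [AddCommGroup V] [Module (ZMod p) V] [FiniteDimensional (ZMod p) V]
    (B : V →ₗ[ZMod p] V →ₗ[ZMod p] ZMod p) (hsymm : ∀ x y, B x y = B y x)
    (b c : V) (hind : LinearIndependent (ZMod p) ![b, c])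
    (hspan : Submodule.span (ZMod p) {b, c} = ⊤)
    (hb : B b b ≠ 0)
    (hrad : LinearMap.BilinForm.orthogonal B ⊤ = Submodule.span (ZMod p) {c})
    (Ohat : Subgroup (V ≃ₗ[ZMod p] V))
    (hOhat : ∀ g, g ∈ Ohat ↔ ((∀ x y, B (g x) (g y) = B x y) ∧
      ∀ x ∈ Submodule.span (ZMod p) {c}, g x = x)) :
    (∀ g ∈ Ohat, ∃ ε μ : ZMod p, (ε = 1 ∨ ε = -1) ∧ g b = ε • b + μ • c ∧ g c = c) ∧
    Nat.card Ohat = 2 * p ∧ Nonempty (Ohat ≃* DihedralGroup p) :=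
  Ohat_of_singular_plane_general p (hp := hp) hodd V B hsymm b c hind hspan hb hrad Ohat hOhat
end

section
/- Let V be a non-singular finite-dimensional quadratic space over a field of odd characteristic, and let H be a singular hyperplane of V (i.e., rad H ≠ {0}). If g is an isometry of V that fixes H pointwise, then g is the identity on V. -/
/-!
Since the form is non-degenerate, the orthogonal of the hyperplane `H` is a line, so it is spanned
by a nonzero radical vector `u` of `H`, and `H` is in turn the orthogonal of `u`. An isometry `g`
fixing `H` moves every `y` by a vector orthogonal to `H`, i.e. `g y = y + c • u`. As `u` is
isotropic, `B (g y) (g y) = B y y` reduces to `2 * c * B u y = 0`: either `c = 0`, or `y ⊥ u`,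
which puts `y` in `H`. Either way `g y = y`.
-/

open Module Submodule

namespace LinearMap.BilinForm

section Field

variable {K V : Type*} [Field K] [AddCommGroup V] [Module K V] [FiniteDimensional K V]
  {B : LinearMap.BilinForm K V} {W : Submodule K V} {u : V}

theorem orthogonal_eq_span_singleton_of_finrank_add_one (hB : B.Nondegenerate)
    (hW : finrank K W + 1 = finrank K V) (hu : u ∈ B.orthogonal W) (hu0 : u ≠ 0) :
    B.orthogonal W = K ∙ u :=
  eq_span_singleton_of_mem_of_finrank_eq_one (by rw [finrank_orthogonal hB]; omega) hu hu0

theorem eq_ker_of_finrank_add_one (hB : B.Nondegenerate) (hB₀ : B.IsRefl)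
    (hW : finrank K W + 1 = finrank K V) (hu : u ∈ B.orthogonal W) (hu0 : u ≠ 0) :
    W = LinearMap.ker (B u) := by
  rw [← orthogonal_orthogonal hB hB₀ W,
    orthogonal_eq_span_singleton_of_finrank_add_one hB hW hu hu0,
    orthogonal_span_singleton_eq_toLin_ker]
  rfl

end Field

theorem sub_mem_orthogonal_of_isometry_of_forall_mem_eq {R M : Type*} [CommRing R]
    [AddCommGroup M] [Module R M] {B : LinearMap.BilinForm R M} {W : Submodule R M}
    {f : M →ₗ[R] M} (hf : ∀ x y, B (f x) (f y) = B x y) (hW : ∀ x ∈ W, f x = x) (y : M) :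
    f y - y ∈ B.orthogonal W := fun x hx => by
  rw [map_sub, ← hf x y, hW x hx, sub_self]

theorem eq_zero_or_apply_eq_zero_of_apply_add_smul_self {R M : Type*} [CommRing R]
    [NoZeroDivisors R] [AddCommGroup M] [Module R M] {B : LinearMap.BilinForm R M} (hB : B.IsSymm)
    (h2 : (2 : R) ≠ 0) {u : M} (hu : B u u = 0) {y : M} {c : R}
    (h : B (y + c • u) (y + c • u) = B y y) :
    c = 0 ∨ B u y = 0 := by
  have key : 2 * (c * B u y) = 0 := by
    simp only [map_add, map_smul, LinearMap.add_apply, LinearMap.smul_apply, smul_eq_mul, hu,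
      hB.eq y u] at h
    linear_combination h
  exact mul_eq_zero.mp ((mul_eq_zero.mp key).resolve_left h2)

end LinearMap.BilinForm

open LinearMap.BilinForm in
theorem isometry_fixing_singular_hyperplane_general (K : Type*) [Field K] (hchar : (2 : K) ≠ 0)
    (V : Type*) [AddCommGroup V] [Module K V] [FiniteDimensional K V]
    (B : V →ₗ[K] V →ₗ[K] K) (hsymm : ∀ x y, B x y = B y x)
    (hnd : ∀ x, (∀ y, B x y = 0) → x = 0)
    (H : Submodule K V)
    (hhyp : Module.finrank K H = Module.finrank K V - 1)
    (hsing : ∃ x ∈ H, x ≠ 0 ∧ ∀ y ∈ H, B x y = 0)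
    (g : V ≃ₗ[K] V) (hgiso : ∀ x y, B (g x) (g y) = B x y)
    (hfix : ∀ x ∈ H, g x = x) :
    g = LinearEquiv.refl K V := by
  obtain ⟨u, huH, hu0, hrad⟩ := hsing
  have hB : IsSymm B := ⟨hsymm⟩
  have hBnd : B.Nondegenerate := ⟨hnd, fun y hy => hnd y fun x => hsymm y x ▸ hy x⟩
  have hu : u ∈ orthogonal B H := fun x hx => hsymm u x ▸ hrad x hx
  have : Nontrivial V := nontrivial_of_ne u 0 hu0
  have hdim : finrank K H + 1 = finrank K V := by have := finrank_pos (R := K) (M := V); omega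
  ext y
  obtain ⟨c, hc⟩ := mem_span_singleton.mp <|
    orthogonal_eq_span_singleton_of_finrank_add_one hBnd hdim hu hu0 ▸
      sub_mem_orthogonal_of_isometry_of_forall_mem_eq (f := g.toLinearMap) hgiso hfix y
  have hgy : g y = y + c • u := by simp [hc]
  rcases eq_zero_or_apply_eq_zero_of_apply_add_smul_self hB hchar (hrad u huH)
      (hgy ▸ hgiso y y) with rfl | hy
  · simpa using hgy
  · exact hfix y (eq_ker_of_finrank_add_one hBnd hB.isRefl hdim hu hu0 ▸ hy)

/-- An isometry of a non-singular quadratic space fixing a singular hyperplane pointwise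
is the identity. -/
theorem isometry_fixing_singular_hyperplane (K : Type*) [Field K] (hchar : (2 : K) ≠ 0)
    (V : Type*) [AddCommGroup V] [Module K V] [FiniteDimensional K V]
    (B : V →ₗ[K] V →ₗ[K] K) (hsymm : ∀ x y, B x y = B y x)
    (hnd : ∀ x, (∀ y, B x y = 0) → x = 0)
    (H : Submodule K V)
    (hhyp : Module.finrank K H = Module.finrank K V - 1)
    (hlt : H ≠ ⊤)
    (hsing : ∃ x ∈ H, x ≠ 0 ∧ ∀ y ∈ H, B x y = 0)
    (g : V ≃ₗ[K] V) (hgiso : ∀ x y, B (g x) (g y) = B x y)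
    (hfix : ∀ x ∈ H, g x = x) :
    g = LinearEquiv.refl K V :=
  isometry_fixing_singular_hyperplane_general K hchar V B hsymm hnd H hhyp hsing g hgiso hfix
end

section
/- Let V be a non-singular finite-dimensional quadratic space over Z_p (p odd), and suppose V = U ⊕ ⟨v⟩ is an orthogonal direct sum with v anisotropic. Then the pointwise stabilizer of ⟨v⟩ in O(V) (isometries fixing v) restricted to U is isomorphic to O(U), and the isomorphism preserves the spinor norm: g ∈ O(V) fixing v has square spinor norm on V if and only if its restriction to U has square spinor norm on U. -/
/-!
Restriction to `U` and extension by the identity on `⟨v⟩` are mutually inverse, and the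
extension of the reflection of `U` with root `a` is the reflection of `V` with root `a`. Hence
square spinor norm on `U` gives square spinor norm on `V`. Conversely, write `g|_U` as a product
of reflections of `U` (Cartan–Dieudonné); then `g` has two factorizations into reflections, and
the spinor norm does not depend on the factorization: if `r_{a_1} ⋯ r_{a_k} = 1`, the Clifford
product `α = a_1 ⋯ a_k` satisfies `w α = α̂ w` for every vector `w`, which forces `α` to be a
scalar `c` (expand along an orthogonal basis), and then `Q(a_1) ⋯ Q(a_k) = ᾱ α = c²`.
-/

/-- `g` is the reflection of the quadratic space `(V, B)` with (anisotropic) root `a`. -/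
def IsReflectionWithRoot {K V : Type*} [Field K] [AddCommGroup V] [Module K V]
    (B : V →ₗ[K] V →ₗ[K] K) (a : V) (g : V ≃ₗ[K] V) : Prop :=
  B a a ≠ 0 ∧ ∀ x, g x = x - (2 * B x a * (B a a)⁻¹) • a

/-- `g` is a product of reflections whose roots have norms with square product. -/
def HasSquareSpinorNorm {K V : Type*} [Field K] [AddCommGroup V] [Module K V]
    (B : V →ₗ[K] V →ₗ[K] K) (g : V ≃ₗ[K] V) : Prop :=
  ∃ (k : ℕ) (a : Fin k → V) (r : Fin k → (V ≃ₗ[K] V)),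
    (∀ i, IsReflectionWithRoot B (a i) (r i)) ∧
    g = (List.ofFn r).prod ∧ IsSquare (∏ i, B (a i) (a i))

namespace LinearMap.BilinForm

variable {K V : Type*} [Field K] [AddCommGroup V] [Module K V] (B : LinearMap.BilinForm K V)

/-- The reflection with root `a`; for isotropic `a` it is the identity, as `(B a a)⁻¹ = 0`. -/
def reflection (a : V) : V ≃ₗ[K] V :=
  LinearEquiv.ofInvolutive
    { toFun x := x - (2 * B x a * (B a a)⁻¹) • a
      map_add' x y := by
        simp only [map_add, LinearMap.add_apply]
        module
      map_smul' c x := by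
        simp only [map_smul, LinearMap.smul_apply, RingHom.id_apply, smul_eq_mul]
        module }
    fun x => by
      by_cases h : B a a = 0
      · simp [h]
      · simp only [LinearMap.coe_mk, AddHom.coe_mk, map_sub, map_smul]
        match_scalars
        · ring
        · field_simp
          ring

theorem reflection_apply (a x : V) :
    B.reflection a x = x - (2 * B x a * (B a a)⁻¹) • a := rfl

theorem reflection_mul_self (a : V) : B.reflection a * B.reflection a = 1 :=
  LinearEquiv.ext (B.reflection a).symm_apply_apply

theorem reflection_inv (a : V) : (B.reflection a)⁻¹ = B.reflection a :=
  inv_eq_of_mul_eq_one_right (B.reflection_mul_self a)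

theorem prod_reflection_inv (L : List V) :
    (L.map B.reflection).prod⁻¹ = (L.reverse.map B.reflection).prod := by
  simp [List.prod_inv_reverse, List.map_reverse, Function.comp_def, reflection_inv]

theorem reflection_apply_self {a : V} (ha : B a a ≠ 0) : B.reflection a a = -a := by
  rw [reflection_apply, mul_inv_cancel_right₀ ha]
  module

theorem isReflectionWithRoot_iff (a : V) (g : V ≃ₗ[K] V) :
    IsReflectionWithRoot B a g ↔ B a a ≠ 0 ∧ g = B.reflection a :=
  and_congr_right fun _ => ⟨fun h => LinearEquiv.ext h, fun h x => by rw [h]; rfl⟩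

theorem hasSquareSpinorNorm_iff (g : V ≃ₗ[K] V) :
    HasSquareSpinorNorm B g ↔ ∃ L : List V, (∀ a ∈ L, B a a ≠ 0) ∧
      g = (L.map B.reflection).prod ∧ IsSquare (L.map fun a => B a a).prod := by
  constructor
  · rintro ⟨k, a, r, hr, rfl, hsq⟩
    obtain ⟨ha, rfl⟩ : (∀ i, B (a i) (a i) ≠ 0) ∧ r = fun i => B.reflection (a i) :=
      ⟨fun i => (hr i).1, funext fun i => ((B.isReflectionWithRoot_iff _ _).1 (hr i)).2⟩
    refine ⟨List.ofFn a, ?_, by rw [List.map_ofFn]; rfl, by rwa [List.map_ofFn, List.prod_ofFn]⟩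
    simpa [List.mem_ofFn] using ha
  · rintro ⟨L, hL, rfl, hsq⟩
    refine ⟨L.length, L.get, fun i => B.reflection (L.get i),
      fun i => (B.isReflectionWithRoot_iff _ _).2 ⟨hL _ (L.get_mem i), rfl⟩, ?_, ?_⟩
    · conv_lhs => rw [← List.ofFn_get L]
      rw [List.map_ofFn]
      rfl
    · conv at hsq => rw [← List.ofFn_get L]
      rwa [List.map_ofFn, List.prod_ofFn] at hsq

theorem reflection_sub_apply {v w : V} (hB : B.IsSymm) (hvw : B v v = B w w)
    (h : B (v - w) (v - w) ≠ 0) : B.reflection (v - w) w = v := by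
  have hcoef : 2 * B w (v - w) = -B (v - w) (v - w) := by
    simp only [map_sub, LinearMap.sub_apply]
    linear_combination hB.eq w v + hvw
  rw [reflection_apply, hcoef, neg_mul, mul_inv_cancel₀ h]
  module

theorem reflection_add_apply {v w : V} (hB : B.IsSymm) (hvw : B v v = B w w)
    (h : B (v + w) (v + w) ≠ 0) : B.reflection (v + w) w = -v := by
  have hcoef : 2 * B w (v + w) = B (v + w) (v + w) := by
    simp only [map_add, LinearMap.add_apply]
    linear_combination hB.eq w v - hvw
  rw [reflection_apply, hcoef, mul_inv_cancel₀ h]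
  module

theorem exists_prod_reflection_apply_eq (htwo : (2 : K) ≠ 0) (hB : B.IsSymm) {v w : V}
    (hv : B v v ≠ 0) (hvw : B v v = B w w) :
    ∃ P : List V, (∀ a ∈ P, B a a ≠ 0) ∧ (P.map B.reflection).prod w = v := by
  by_cases h : B (v - w) (v - w) = 0
  · have hsum : B (v + w) (v + w) = 2 * 2 * B v v := by
      simp only [map_add, map_sub, LinearMap.add_apply, LinearMap.sub_apply] at h ⊢
      linear_combination -h - 2 * hvw
    have hne : B (v + w) (v + w) ≠ 0 := by
      rw [hsum]
      exact mul_ne_zero (mul_ne_zero htwo htwo) hv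
    refine ⟨[v, v + w], fun a ha => by rcases List.mem_pair.1 ha with rfl | rfl <;> assumption, ?_⟩
    simp [LinearEquiv.mul_apply, B.reflection_add_apply hB hvw hne, B.reflection_apply_self hv]
  · exact ⟨[v - w], by simpa using h, by simpa using B.reflection_sub_apply hB hvw h⟩

def isometryGroup : Subgroup (V ≃ₗ[K] V) where
  carrier := {g | ∀ x y, B (g x) (g y) = B x y}
  mul_mem' hg hh x y := (hg _ _).trans (hh x y)
  one_mem' _ _ := rfl
  inv_mem' {g} hg x y := by
    simpa using (hg (g⁻¹ x) (g⁻¹ y)).symm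

theorem reflection_mem_isometryGroup (hB : B.IsSymm) (a : V) :
    B.reflection a ∈ B.isometryGroup := by
  intro x y
  by_cases h : B a a = 0
  · simp [reflection_apply, h]
  · simp only [reflection_apply, map_sub, LinearMap.sub_apply, map_smul, LinearMap.smul_apply,
      smul_eq_mul]
    field_simp
    rw [hB.eq a y]
    ring

def isometryStabilizer (v : V) : Subgroup (V ≃ₗ[K] V) :=
  B.isometryGroup ⊓ MulAction.stabilizer (V ≃ₗ[K] V) v

theorem mem_isometryStabilizer {v : V} {g : V ≃ₗ[K] V} :
    g ∈ B.isometryStabilizer v ↔ g ∈ B.isometryGroup ∧ g v = v := Iff.rfl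

theorem prod_reflection_mem_isometryGroup (hB : B.IsSymm) (L : List V) :
    (L.map B.reflection).prod ∈ B.isometryGroup :=
  list_prod_mem (by simpa using fun a _ => B.reflection_mem_isometryGroup hB a)

section Splitting

variable {B} {v : V} (hv : B v v ≠ 0) {U : Submodule K V} (hU : ∀ x, x ∈ U ↔ B x v = 0)

def orthogonalProj : V →ₗ[K] U where
  toFun x := ⟨x - (B x v / B v v) • v, (hU _).2 (by simp [hv])⟩
  map_add' x y := by
    ext
    simp only [map_add, LinearMap.add_apply, Submodule.coe_add]
    module
  map_smul' c x := by
    ext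
    simp only [map_smul, LinearMap.smul_apply, RingHom.id_apply, SetLike.val_smul, smul_eq_mul]
    module

theorem coe_orthogonalProj (x : V) :
    (orthogonalProj hv hU x : V) = x - (B x v / B v v) • v := rfl

theorem orthogonalProj_coe (u : U) : orthogonalProj hv hU u = u := by
  ext
  simp [coe_orthogonalProj, (hU u).1 u.2]

theorem apply_coe_orthogonalProj (u : U) (y : V) :
    B u (orthogonalProj hv hU y) = B u y := by
  simp [coe_orthogonalProj, (hU u).1 u.2]

theorem apply_orthogonalProj_coe (hB : B.IsSymm) (x : V) (u : U) :
    B (orthogonalProj hv hU x) u = B x u := by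
  simp [coe_orthogonalProj, hB.eq v u, (hU u).1 u.2]

theorem apply_eq_apply_orthogonalProj_add (hB : B.IsSymm) (x y : V) :
    B x y = B (orthogonalProj hv hU x) (orthogonalProj hv hU y) + B x v * B y v / B v v := by
  simp only [coe_orthogonalProj, map_sub, LinearMap.sub_apply, map_smul, LinearMap.smul_apply,
    smul_eq_mul]
  rw [hB.eq v y]
  field_simp
  ring

theorem orthogonalProj_add_smul (u : U) (c : K) : orthogonalProj hv hU (u + c • v) = u := by
  ext
  simp [coe_orthogonalProj, (hU u).1 u.2, hv]

theorem orthogonalProj_self : orthogonalProj hv hU v = 0 := by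
  ext
  simp [coe_orthogonalProj, hv]

def extendFixingEnd : Module.End K U →* Module.End K V where
  toFun h := U.subtype ∘ₗ h ∘ₗ orthogonalProj hv hU + ((B v v)⁻¹ • B.flip v).smulRight v
  map_one' := by
    ext x
    simp [coe_orthogonalProj, div_eq_inv_mul]
  map_mul' h h' := by
    ext x
    simp only [LinearMap.add_apply, LinearMap.comp_apply, LinearMap.smulRight_apply,
      LinearMap.smul_apply, Module.End.mul_apply, Submodule.coe_subtype, smul_eq_mul,
      orthogonalProj_add_smul]
    simp only [flip_apply, map_add, map_smul, (hU _).1 (Subtype.mem _), smul_eq_mul, zero_add]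
    field_simp

theorem extendFixingEnd_apply (h : Module.End K U) (x : V) :
    extendFixingEnd hv hU h x = h (orthogonalProj hv hU x) + (B x v / B v v) • v := by
  simp [extendFixingEnd, div_eq_inv_mul]

def extendFixing : (U ≃ₗ[K] U) →* (V ≃ₗ[K] V) :=
  (LinearMap.GeneralLinearGroup.generalLinearEquiv K V).toMonoidHom.comp <|
    (Units.map (extendFixingEnd hv hU)).comp
      (LinearMap.GeneralLinearGroup.generalLinearEquiv K U).symm.toMonoidHom

theorem extendFixing_apply (h : U ≃ₗ[K] U) (x : V) :
    extendFixing hv hU h x = h (orthogonalProj hv hU x) + (B x v / B v v) • v :=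
  extendFixingEnd_apply hv hU h x

theorem extendFixing_apply_coe (h : U ≃ₗ[K] U) (u : U) : extendFixing hv hU h u = h u := by
  simp [extendFixing_apply, orthogonalProj_coe, (hU u).1 u.2]

theorem extendFixing_apply_self (h : U ≃ₗ[K] U) : extendFixing hv hU h v = v := by
  simp [extendFixing_apply, orthogonalProj_self, hv]

theorem orthogonalProj_extendFixing (h : U ≃ₗ[K] U) (x : V) :
    orthogonalProj hv hU (extendFixing hv hU h x) = h (orthogonalProj hv hU x) := by
  rw [extendFixing_apply, orthogonalProj_add_smul]

theorem extendFixing_apply_left_self (h : U ≃ₗ[K] U) (x : V) :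
    B (extendFixing hv hU h x) v = B x v := by
  simp [extendFixing_apply, (hU _).1 (Subtype.mem _), hv]

theorem extendFixing_mem (hB : B.IsSymm) {h : U ≃ₗ[K] U} (hh : h ∈ (B.restrict U).isometryGroup) :
    extendFixing hv hU h ∈ B.isometryStabilizer v := by
  refine ⟨fun x y => ?_, extendFixing_apply_self hv hU h⟩
  rw [apply_eq_apply_orthogonalProj_add hv hU hB x y,
    apply_eq_apply_orthogonalProj_add hv hU hB (extendFixing hv hU h x),
    orthogonalProj_extendFixing, orthogonalProj_extendFixing, extendFixing_apply_left_self,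
    extendFixing_apply_left_self]
  exact congrArg (· + _) (hh _ _)

theorem extendFixing_reflection (hB : B.IsSymm) (a : U) :
    extendFixing hv hU ((B.restrict U).reflection a) = B.reflection a := by
  ext x
  rw [extendFixing_apply, reflection_apply, reflection_apply]
  simp only [restrict_apply, LinearMap.domRestrict_apply, Submodule.coe_sub, SetLike.val_smul]
  rw [apply_orthogonalProj_coe hv hU hB, coe_orthogonalProj]
  abel

theorem extendFixing_prod_reflection (hB : B.IsSymm) (L : List U) :
    extendFixing hv hU (L.map (B.restrict U).reflection).prod
      = ((L.map (↑)).map B.reflection).prod := by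
  rw [map_list_prod, List.map_map, List.map_map]
  congr 1
  exact List.map_congr_left fun a _ => extendFixing_reflection hv hU hB a

def restrictFixing (g : B.isometryStabilizer v) : U ≃ₗ[K] U :=
  have mapsTo {g : V ≃ₗ[K] V} (hg : g ∈ B.isometryStabilizer v) (u : V) (hu : u ∈ U) :
      g u ∈ U := by
    obtain ⟨hiso, hfix⟩ := B.mem_isometryStabilizer.1 hg
    rw [hU, ← hfix, hiso]
    exact (hU u).1 hu
  LinearEquiv.ofLinearMap ((g : V ≃ₗ[K] V).toLinearMap.restrict (mapsTo g.2))
    (((g⁻¹ : B.isometryStabilizer v) : V ≃ₗ[K] V).toLinearMap.restrict (mapsTo g⁻¹.2))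
    (by ext; simp)
    (by ext; simp)

theorem coe_restrictFixing_apply (g : B.isometryStabilizer v) (u : U) :
    (restrictFixing hU g u : V) = (g : V ≃ₗ[K] V) u := rfl

theorem extendFixing_restrictFixing (g : B.isometryStabilizer v) :
    extendFixing hv hU (restrictFixing hU g) = g := by
  ext x
  rw [extendFixing_apply, coe_restrictFixing_apply, coe_orthogonalProj, map_sub, map_smul,
    (B.mem_isometryStabilizer.1 g.2).2, sub_add_cancel]

theorem restrictFixing_mem (g : B.isometryStabilizer v) :
    restrictFixing hU g ∈ (B.restrict U).isometryGroup :=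
  fun x y => (B.mem_isometryStabilizer.1 g.2).1 x y

def restrictFixingEquiv (hB : B.IsSymm) :
    B.isometryStabilizer v ≃* (B.restrict U).isometryGroup where
  toFun g := ⟨restrictFixing hU g, restrictFixing_mem hU g⟩
  invFun h := ⟨extendFixing hv hU h, extendFixing_mem hv hU hB h.2⟩
  left_inv g := Subtype.ext (extendFixing_restrictFixing hv hU g)
  right_inv h := Subtype.ext <| LinearEquiv.ext fun u =>
    Subtype.ext (extendFixing_apply_coe hv hU h u)
  map_mul' _ _ := rfl

end Splitting

theorem mem_iff_apply_eq_zero_of_sup_span_eq_top {v : V} (hv : B v v ≠ 0) {U : Submodule K V}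
    (horth : ∀ u ∈ U, B u v = 0) (hsup : U ⊔ K ∙ v = ⊤) (x : V) : x ∈ U ↔ B x v = 0 := by
  refine ⟨horth x, fun hx => ?_⟩
  obtain ⟨u, hu, w, hw, rfl⟩ := Submodule.mem_sup.1 (hsup ▸ Submodule.mem_top : x ∈ U ⊔ K ∙ v)
  obtain ⟨c, rfl⟩ := Submodule.mem_span_singleton.1 hw
  rw [map_add, LinearMap.add_apply, horth u hu, map_smul, LinearMap.smul_apply, smul_eq_mul,
    zero_add, mul_eq_zero] at hx
  rw [hx.resolve_right hv, zero_smul, add_zero]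
  exact hu

theorem separatingLeft_restrict_orthogonal (hnd : B.SeparatingLeft) {v : V}
    (hv : B v v ≠ 0) {U : Submodule K V} (hU : ∀ x, x ∈ U ↔ B x v = 0) :
    (B.restrict U).SeparatingLeft :=
  fun u hu => Subtype.ext <| hnd u fun y => by
    rw [← apply_coe_orthogonalProj hv hU]
    exact hu (orthogonalProj hv hU y)

theorem exists_prod_reflection_eq [FiniteDimensional K V] (htwo : (2 : K) ≠ 0) (hB : B.IsSymm)
    (hnd : B.SeparatingLeft) {g : V ≃ₗ[K] V} (hg : g ∈ B.isometryGroup) :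
    ∃ L : List V, (∀ a ∈ L, B a a ≠ 0) ∧ g = (L.map B.reflection).prod := by
  induction hn : Module.finrank K V using Nat.strong_induction_on generalizing V with
  | _ n ih =>
    rcases subsingleton_or_nontrivial V with hV | hV
    · exact ⟨[], by simp, Subsingleton.elim _ _⟩
    have : Invertible (2 : K) := invertibleOfNonzero htwo
    obtain ⟨v, hv⟩ : ∃ v, B v v ≠ 0 := by
      refine exists_bilinForm_self_ne_zero (fun hB0 => ?_) (isSymm_iff.1 hB)
      obtain ⟨x, hx⟩ := exists_ne (0 : V)
      exact hx (hnd x fun y => by simp [hB0])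
    -- after reflections sending `g v` back to `v`, what remains of `g` acts on `v^⊥`
    obtain ⟨P, hP, hPg⟩ := B.exists_prod_reflection_apply_eq htwo hB hv (hg v v).symm
    have hg₁ : (P.map B.reflection).prod * g ∈ B.isometryStabilizer v :=
      ⟨mul_mem (B.prod_reflection_mem_isometryGroup hB P) hg, hPg⟩
    set U := LinearMap.ker (B.flip v)
    have hU (x : V) : x ∈ U ↔ B x v = 0 := LinearMap.mem_ker
    have hUV : Module.finrank K U < n := hn ▸ Submodule.finrank_lt fun hU_top =>
      hv ((hU v).1 (hU_top ▸ Submodule.mem_top))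
    obtain ⟨L, hL, hgL⟩ := ih _ hUV (B.restrict U) (hB.restrict U)
      (B.separatingLeft_restrict_orthogonal hnd hv hU) (restrictFixing_mem hU ⟨_, hg₁⟩) rfl
    refine ⟨P.reverse ++ L.map (↑), ?_, ?_⟩
    · simp only [List.mem_append, List.mem_reverse, List.mem_map]
      rintro a (ha | ⟨u, hu, rfl⟩)
      exacts [hP a ha, hL u hu]
    · calc g = (P.map B.reflection).prod⁻¹ * ((P.map B.reflection).prod * g) := by group
        _ = (P.reverse.map B.reflection).prod
            * extendFixing hv hU (restrictFixing hU ⟨_, hg₁⟩) := by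
          rw [prod_reflection_inv, extendFixing_restrictFixing]
        _ = _ := by
          rw [hgL, extendFixing_prod_reflection hv hU hB, List.map_append, List.prod_append]

end LinearMap.BilinForm

namespace CliffordAlgebra

variable {R M : Type*} [CommRing R] [AddCommGroup M] [Module R M] {Q : QuadraticForm R M}

theorem involute_mem_adjoin {s : Set M} {a : CliffordAlgebra Q}
    (ha : a ∈ Algebra.adjoin R (ι Q '' s)) : involute a ∈ Algebra.adjoin R (ι Q '' s) := by
  induction ha using Algebra.adjoin_induction with
  | mem x hx =>
    obtain ⟨m, hm, rfl⟩ := hx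
    rw [involute_ι]
    exact neg_mem (Algebra.subset_adjoin ⟨m, hm, rfl⟩)
  | algebraMap r =>
    rw [AlgHom.commutes]
    exact Subalgebra.algebraMap_mem _ r
  | add x y _ _ hx hy => rw [map_add]; exact add_mem hx hy
  | mul x y _ _ hx hy => rw [map_mul]; exact mul_mem hx hy

theorem ι_mul_eq_involute_mul_ι_of_mem_adjoin {e : M} {s : Set M}
    (he : ∀ m ∈ s, QuadraticMap.polar Q e m = 0)
    {a : CliffordAlgebra Q} (ha : a ∈ Algebra.adjoin R (ι Q '' s)) :
    ι Q e * a = involute a * ι Q e := by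
  induction ha using Algebra.adjoin_induction with
  | mem x hx =>
    obtain ⟨m, hm, rfl⟩ := hx
    have hanti := ι_mul_ι_add_swap (Q := Q) e m
    rw [he m hm, map_zero] at hanti
    rw [involute_ι, eq_neg_of_add_eq_zero_left hanti, neg_mul]
  | algebraMap r => rw [AlgHom.commutes, Algebra.commutes]
  | add x y _ _ hx hy => rw [map_add, mul_add, add_mul, hx, hy]
  | mul x y _ _ hx hy => rw [← mul_assoc, hx, mul_assoc, hy, ← mul_assoc, map_mul]

theorem exists_eq_add_ι_mul_of_mem_adjoin_insert {e : M} {s : Set M}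
    (he : ∀ m ∈ s, QuadraticMap.polar Q e m = 0) {a : CliffordAlgebra Q}
    (ha : a ∈ Algebra.adjoin R (ι Q '' insert e s)) :
    ∃ x ∈ Algebra.adjoin R (ι Q '' s), ∃ y ∈ Algebra.adjoin R (ι Q '' s), a = x + ι Q e * y := by
  have hcomm {z} (hz : z ∈ Algebra.adjoin R (ι Q '' s)) : z * ι Q e = ι Q e * involute z := by
    rw [ι_mul_eq_involute_mul_ι_of_mem_adjoin he (involute_mem_adjoin hz), involute_involute]
  induction ha using Algebra.adjoin_induction with
  | mem z hz =>
    obtain ⟨m, hm, rfl⟩ := hz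
    rcases Set.mem_insert_iff.mp hm with rfl | hm
    · exact ⟨0, zero_mem _, 1, one_mem _, by rw [mul_one, zero_add]⟩
    · exact ⟨ι Q m, Algebra.subset_adjoin ⟨m, hm, rfl⟩, 0, zero_mem _, by rw [mul_zero, add_zero]⟩
  | algebraMap r =>
    exact ⟨algebraMap R _ r, Subalgebra.algebraMap_mem _ r, 0, zero_mem _, by
      rw [mul_zero, add_zero]⟩
  | add _ _ _ _ ihx ihy =>
    obtain ⟨x₁, hx₁, y₁, hy₁, rfl⟩ := ihx
    obtain ⟨x₂, hx₂, y₂, hy₂, rfl⟩ := ihy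
    exact ⟨x₁ + x₂, add_mem hx₁ hx₂, y₁ + y₂, add_mem hy₁ hy₂, by rw [mul_add]; abel⟩
  | mul _ _ _ _ ihx ihy =>
    obtain ⟨x₁, hx₁, y₁, hy₁, rfl⟩ := ihx
    obtain ⟨x₂, hx₂, y₂, hy₂, rfl⟩ := ihy
    -- `ι e` is moved to the left past `x₁` and `y₁`, and `ι e * ι e` is the scalar `Q e`
    refine ⟨x₁ * x₂ + algebraMap R _ (Q e) * (involute y₁ * y₂),
      add_mem (mul_mem hx₁ hx₂) (mul_mem (Subalgebra.algebraMap_mem _ _)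
        (mul_mem (involute_mem_adjoin hy₁) hy₂)),
      involute x₁ * y₂ + y₁ * x₂,
      add_mem (mul_mem (involute_mem_adjoin hx₁) hy₂) (mul_mem hy₁ hx₂), ?_⟩
    have h₁ : x₁ * (ι Q e * y₂) = ι Q e * (involute x₁ * y₂) := by
      rw [← mul_assoc, hcomm hx₁, mul_assoc]
    have h₂ : ι Q e * y₁ * (ι Q e * y₂) = algebraMap R _ (Q e) * (involute y₁ * y₂) := by
      rw [← mul_assoc, mul_assoc (ι Q e) y₁, hcomm hy₁, ← mul_assoc, ι_sq_scalar, mul_assoc]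
    rw [add_mul, mul_add, mul_add, h₁, h₂, mul_assoc (ι Q e) y₁ x₂, mul_add (ι Q e)]
    abel

theorem exists_algebraMap_eq_of_mem_adjoin {K : Type*} [Field K] [Module K M]
    {Q : QuadraticForm K M} (htwo : (2 : K) ≠ 0) {l : List M}
    (hl : l.Pairwise fun a b => QuadraticMap.polar Q a b = 0) (hQ : ∀ a ∈ l, Q a ≠ 0)
    {α : CliffordAlgebra Q} (hα : α ∈ Algebra.adjoin K (ι Q '' {x | x ∈ l}))
    (hcomm : ∀ e ∈ l, ι Q e * α = involute α * ι Q e) :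
    ∃ c : K, algebraMap K _ c = α := by
  induction l generalizing α with
  | nil =>
    simpa [Algebra.mem_bot] using hα
  | cons e l ih =>
    obtain ⟨he, hl⟩ := List.pairwise_cons.1 hl
    rw [show {x | x ∈ e :: l} = insert e {x | x ∈ l} from Set.ext fun _ => List.mem_cons] at hα
    obtain ⟨x, hx, y, hy, rfl⟩ := exists_eq_add_ι_mul_of_mem_adjoin_insert he hα
    -- for `α = x + ι e * y`, the relation `ι e * α = involute α * ι e` reduces to `2 Q(e) • y = 0`
    have hy0 : y = 0 := by
      have hcomm_e := hcomm e List.mem_cons_self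
      rw [mul_add, map_add, map_mul, involute_ι, add_mul,
        ← ι_mul_eq_involute_mul_ι_of_mem_adjoin he hx, neg_mul, neg_mul, mul_assoc,
        ← ι_mul_eq_involute_mul_ι_of_mem_adjoin he hy, ← mul_assoc, ι_sq_scalar, add_right_inj,
        eq_neg_iff_add_eq_zero, ← Algebra.smul_def, ← add_smul, smul_eq_zero] at hcomm_e
      exact hcomm_e.resolve_left (by
        rw [← two_mul]
        exact mul_ne_zero htwo (hQ e List.mem_cons_self))
    subst hy0
    rw [mul_zero, add_zero] at hcomm ⊢
    exact ih hl (fun a ha => hQ a (List.mem_cons_of_mem e ha)) hx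
      fun a ha => hcomm a (List.mem_cons_of_mem e ha)

theorem reverse_prod_map_ι_mul_prod_map_ι (L : List M) :
    reverse (L.map (ι Q)).prod * (L.map (ι Q)).prod = algebraMap R _ (L.map Q).prod := by
  induction L with
  | nil => simp
  | cons a L ih =>
    simp only [List.map_cons, List.prod_cons, reverse.map_mul, reverse_ι, map_mul]
    rw [mul_assoc, ← mul_assoc (ι Q a), ι_sq_scalar, Algebra.commutes, ← mul_assoc, ih]
    exact (Algebra.commutes _ _).symm

end CliffordAlgebra

namespace LinearMap.BilinForm

open CliffordAlgebra

variable {K V : Type*} [Field K] [AddCommGroup V] [Module K V] (B : LinearMap.BilinForm K V)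

theorem ι_mul_ι_eq_neg_ι_reflection_mul (hB : B.IsSymm) {a : V} (ha : B a a ≠ 0) (x : V) :
    ι B.toQuadraticMap a * ι B.toQuadraticMap x
      = -ι B.toQuadraticMap (B.reflection a x) * ι B.toQuadraticMap a := by
  have hanti := ι_mul_ι_add_swap (Q := B.toQuadraticMap) a x
  rw [LinearMap.BilinMap.polar_toQuadraticMap, hB.eq a x] at hanti
  rw [reflection_apply, map_sub, map_smul, neg_sub, sub_mul, smul_mul_assoc, ι_sq_scalar,
    LinearMap.BilinMap.toQuadraticMap_apply, Algebra.smul_def, ← map_mul (algebraMap K _),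
    inv_mul_cancel_right₀ ha, two_mul]
  exact eq_sub_of_add_eq hanti

theorem prod_map_ι_mul_ι (hB : B.IsSymm) {L : List V} (hL : ∀ a ∈ L, B a a ≠ 0) (x : V) :
    (L.map (ι B.toQuadraticMap)).prod * ι B.toQuadraticMap x
      = ((-1 : K) ^ L.length) • (ι B.toQuadraticMap ((L.map B.reflection).prod x)
        * (L.map (ι B.toQuadraticMap)).prod) := by
  induction L with
  | nil => simp
  | cons a L ih =>
    simp only [List.map_cons, List.prod_cons, List.length_cons, List.forall_mem_cons] at hL ⊢
    rw [mul_assoc, ih hL.2, mul_smul_comm, ← mul_assoc, B.ι_mul_ι_eq_neg_ι_reflection_mul hB hL.1,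
      LinearEquiv.mul_apply, pow_succ, mul_comm, mul_smul, neg_mul, neg_mul, mul_assoc, smul_neg,
      neg_one_smul]

theorem exists_algebraMap_eq_of_ι_mul_eq_involute_mul_ι [FiniteDimensional K V]
    (htwo : (2 : K) ≠ 0) (hB : B.IsSymm) (hnd : B.SeparatingLeft)
    {α : CliffordAlgebra B.toQuadraticMap}
    (hα : ∀ w, ι B.toQuadraticMap w * α = involute α * ι B.toQuadraticMap w) :
    ∃ c : K, algebraMap K _ c = α := by
  have : Invertible (2 : K) := invertibleOfNonzero htwo
  obtain ⟨b, hb⟩ := exists_orthogonal_basis (isSymm_iff.1 hB)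
  have hpolar (x y : V) : QuadraticMap.polar B.toQuadraticMap x y = 2 * B x y := by
    rw [LinearMap.BilinMap.polar_toQuadraticMap, hB.eq y x, two_mul]
  have hspan : α ∈ Algebra.adjoin K (ι B.toQuadraticMap '' {x | x ∈ List.ofFn b}) := by
    refine Algebra.adjoin_le ?_ (adjoin_range_ι (Q := B.toQuadraticMap) ▸ Algebra.mem_top)
    rintro _ ⟨m, rfl⟩
    rw [← b.sum_repr m, map_sum]
    refine Subalgebra.sum_mem _ fun i _ => ?_
    rw [map_smul]
    exact Subalgebra.smul_mem _
      (Algebra.subset_adjoin (Set.mem_image_of_mem _ (by simp [List.mem_ofFn]))) _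
  refine exists_algebraMap_eq_of_mem_adjoin htwo ?_ ?_ hspan fun e _ => hα e
  · refine List.pairwise_ofFn.2 fun i j hij => ?_
    rw [hpolar, hb hij.ne, mul_zero]
  · simpa [List.mem_ofFn] using hb.not_isOrtho_basis_self_of_separatingLeft hnd

theorem isSquare_prod_of_prod_reflection_eq_one [FiniteDimensional K V] (htwo : (2 : K) ≠ 0)
    (hB : B.IsSymm) (hnd : B.SeparatingLeft) {L : List V} (hL : ∀ a ∈ L, B a a ≠ 0)
    (h1 : (L.map B.reflection).prod = 1) : IsSquare (L.map fun a => B a a).prod := by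
  set α := (L.map (ι B.toQuadraticMap)).prod
  have hα (w : V) : ι B.toQuadraticMap w * α = involute α * ι B.toQuadraticMap w := by
    rw [involute_prod_map_ι, smul_mul_assoc, B.prod_map_ι_mul_ι hB hL, h1, LinearEquiv.coe_one,
      id_eq, smul_smul, ← mul_pow, neg_one_mul, neg_neg, one_pow, one_smul]
  obtain ⟨c, hc⟩ := B.exists_algebraMap_eq_of_ι_mul_eq_involute_mul_ι htwo hB hnd hα
  have hnorm : reverse α * α = _ := reverse_prod_map_ι_mul_prod_map_ι L
  rw [← hc, reverse.commutes, ← map_mul] at hnorm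
  have : Invertible (2 : K) := invertibleOfNonzero htwo
  exact ⟨c, ((algebraMap K _).injective hnorm).symm⟩

theorem isSquare_prod_of_prod_reflection_eq [FiniteDimensional K V] (htwo : (2 : K) ≠ 0)
    (hB : B.IsSymm) (hnd : B.SeparatingLeft) {L M : List V} (hL : ∀ a ∈ L, B a a ≠ 0)
    (hM : ∀ a ∈ M, B a a ≠ 0) (hLM : (L.map B.reflection).prod = (M.map B.reflection).prod)
    (hsq : IsSquare (L.map fun a => B a a).prod) : IsSquare (M.map fun a => B a a).prod := by
  have h1 : ((M.reverse ++ L).map B.reflection).prod = 1 := by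
    rw [List.map_append, List.prod_append, ← prod_reflection_inv, hLM, inv_mul_cancel]
  have hsq' := B.isSquare_prod_of_prod_reflection_eq_one htwo hB hnd
    (by simpa [or_imp, forall_and] using ⟨hM, hL⟩) h1
  rw [List.map_append, List.prod_append, List.map_reverse, List.prod_reverse] at hsq'
  have hne : (L.map fun a => B a a).prod ≠ 0 := List.prod_ne_zero (by simpa using hL)
  simpa [mul_div_cancel_right₀ _ hne] using hsq'.div hsq

theorem hasSquareSpinorNorm_extendFixing_iff [FiniteDimensional K V] (htwo : (2 : K) ≠ 0)
    (hB : B.IsSymm) (hnd : B.SeparatingLeft) {v : V} (hv : B v v ≠ 0) {U : Submodule K V}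
    (hU : ∀ x, x ∈ U ↔ B x v = 0) {h : U ≃ₗ[K] U} (hh : h ∈ (B.restrict U).isometryGroup) :
    HasSquareSpinorNorm B (extendFixing hv hU h) ↔ HasSquareSpinorNorm (B.restrict U) h := by
  rw [hasSquareSpinorNorm_iff, hasSquareSpinorNorm_iff]
  constructor
  · rintro ⟨L, hL, hgL, hsq⟩
    obtain ⟨M, hM, rfl⟩ := (B.restrict U).exists_prod_reflection_eq htwo
      (hB.restrict U) (B.separatingLeft_restrict_orthogonal hnd hv hU) hh
    refine ⟨M, hM, rfl, ?_⟩
    rw [extendFixing_prod_reflection hv hU hB] at hgL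
    simpa [List.map_map] using
      B.isSquare_prod_of_prod_reflection_eq htwo hB hnd hL (by simpa using hM) hgL.symm hsq
  · rintro ⟨M, hM, rfl, hsq⟩
    refine ⟨M.map (↑), by simpa using hM, extendFixing_prod_reflection hv hU hB M, ?_⟩
    simpa [List.map_map] using hsq

end LinearMap.BilinForm

theorem stabilizer_restricts_to_OU_general (p : ℕ) [hp : Fact p.Prime] (hodd : p ≠ 2)
    (V : Type*) [AddCommGroup V] [Module (ZMod p) V] [FiniteDimensional (ZMod p) V]
    (B : V →ₗ[ZMod p] V →ₗ[ZMod p] ZMod p) (hsymm : ∀ x y, B x y = B y x)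
    (hnd : ∀ x, (∀ y, B x y = 0) → x = 0)
    (U : Submodule (ZMod p) V) (v : V) (hv : B v v ≠ 0)
    (horth : ∀ u ∈ U, B u v = 0)
    (hsup : U ⊔ Submodule.span (ZMod p) {v} = ⊤)
    (S : Subgroup (V ≃ₗ[ZMod p] V))
    (hS : ∀ g, g ∈ S ↔ ((∀ x y, B (g x) (g y) = B x y) ∧ g v = v))
    (OU : Subgroup (U ≃ₗ[ZMod p] U))
    (hOU : ∀ h, h ∈ OU ↔ ∀ x y : U, B ((h x : U) : V) ((h y : U) : V) = B (x : V) (y : V)) :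
    ∃ e : S ≃* OU,
      (∀ (g : S) (x : U), (((e g : U ≃ₗ[ZMod p] U) x : U) : V) = (g : V ≃ₗ[ZMod p] V) x) ∧
      (∀ g : S, HasSquareSpinorNorm B (g : V ≃ₗ[ZMod p] V) ↔
        HasSquareSpinorNorm (LinearMap.BilinForm.restrict B U) (e g : U ≃ₗ[ZMod p] U)) := by
  have htwo : (2 : ZMod p) ≠ 0 := Ring.two_ne_zero (by rwa [ZMod.ringChar_zmod_n])
  have hB : LinearMap.BilinForm.IsSymm B := ⟨hsymm⟩
  have hU := LinearMap.BilinForm.mem_iff_apply_eq_zero_of_sup_span_eq_top B hv horth hsup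
  obtain rfl : S = LinearMap.BilinForm.isometryStabilizer B v := SetLike.ext hS
  obtain rfl : OU = (LinearMap.BilinForm.restrict B U).isometryGroup := SetLike.ext hOU
  refine ⟨LinearMap.BilinForm.restrictFixingEquiv hv hU hB, fun g x => rfl, fun g => ?_⟩
  conv_lhs => rw [← LinearMap.BilinForm.extendFixing_restrictFixing hv hU g]
  exact LinearMap.BilinForm.hasSquareSpinorNorm_extendFixing_iff B htwo hB hnd hv hU
    (LinearMap.BilinForm.restrictFixing_mem hU g)

/-- If `V = U ⊕ ⟨v⟩` is an orthogonal splitting of a non-singular space with `v`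
anisotropic, then the pointwise stabilizer of `⟨v⟩` in `O(V)` restricts isomorphically
onto `O(U)`, and the isomorphism preserves having square spinor norm. -/
theorem stabilizer_restricts_to_OU (p : ℕ) [hp : Fact p.Prime] (hodd : p ≠ 2)
    (V : Type*) [AddCommGroup V] [Module (ZMod p) V] [FiniteDimensional (ZMod p) V]
    (B : V →ₗ[ZMod p] V →ₗ[ZMod p] ZMod p) (hsymm : ∀ x y, B x y = B y x)
    (hnd : ∀ x, (∀ y, B x y = 0) → x = 0)
    (U : Submodule (ZMod p) V) (v : V) (hv : B v v ≠ 0)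
    (horth : ∀ u ∈ U, B u v = 0)
    (hsup : U ⊔ Submodule.span (ZMod p) {v} = ⊤)
    (hinf : U ⊓ Submodule.span (ZMod p) {v} = ⊥)
    (S : Subgroup (V ≃ₗ[ZMod p] V))
    (hS : ∀ g, g ∈ S ↔ ((∀ x y, B (g x) (g y) = B x y) ∧ g v = v))
    (OU : Subgroup (U ≃ₗ[ZMod p] U))
    (hOU : ∀ h, h ∈ OU ↔ ∀ x y : U, B ((h x : U) : V) ((h y : U) : V) = B (x : V) (y : V)) :
    ∃ e : S ≃* OU,
      (∀ (g : S) (x : U), (((e g : U ≃ₗ[ZMod p] U) x : U) : V) = (g : V ≃ₗ[ZMod p] V) x) ∧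
      (∀ g : S, HasSquareSpinorNorm B (g : V ≃ₗ[ZMod p] V) ↔
        HasSquareSpinorNorm (LinearMap.BilinForm.restrict B U) (e g : U ≃ₗ[ZMod p] U)) :=
  stabilizer_restricts_to_OU_general p (hp := hp) hodd V B hsymm hnd U v hv horth hsup S hS OU hOU
end

section
/- Let Γ = ⟨ρ_0, ..., ρ_{n-1}⟩ be a group generated by involutions with string property (ρ_iρ_j = ρ_jρ_i whenever |i−j| ≥ 2). Then Γ satisfies the intersection property ⟨ρ_i : i ∈ I⟩ ∩ ⟨ρ_i : i ∈ J⟩ = ⟨ρ_i : i ∈ I∩J⟩ for all I, J ⊆ {0,...,n−1} if and only if the two subgroups Γ_0 = ⟨ρ_1,...,ρ_{n-1}⟩ and Γ_{n-1} = ⟨ρ_0,...,ρ_{n-2}⟩ each satisfy the intersection property (for their generating sets) and Γ_0 ∩ Γ_{n-1} = ⟨ρ_1,...,ρ_{n-2}⟩. -/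
/-!
Write `⟨I⟩` for `⟨ρ_i : i ∈ I⟩`, and split `I` into its longest initial segment `P(I)` and the
rest. Every index of `I \ P(I)` lies at distance at least two above every index of `P(I)`, so
by the string property `⟨I⟩ = ⟨P(I)⟩ ⟨I \ P(I)⟩`, and `I \ P(I)` avoids `0`. Since the initial
segments are totally ordered we may assume `P(I) ⊆ P(J)`; for `g = b c ∈ ⟨I⟩ ∩ ⟨J⟩` the factor
`b` already lies in `⟨J⟩`, which reduces the claim to `c ∈ ⟨I \ P(I)⟩ ∩ ⟨J⟩ ⊆ Γ₀`. Inside `Γ₀`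
we use its intersection property once we know `⟨J⟩ ∩ Γ₀ = ⟨J ∩ {1,…,n-1}⟩`; for `J ≠ {0,…,n-1}`
this follows by the same splitting of `J`, using that `P(J) ⊆ {0,…,n-2}`, the intersection
property of `Γ_{n-1}` and `Γ₀ ∩ Γ_{n-1} = ⟨ρ_1,…,ρ_{n-2}⟩`.
-/

open Subgroup

theorem Subgroup.exists_mul_eq_of_mem_closure_union {G : Type*} [Group G] {S T : Set G}
    (hST : ∀ a ∈ S, ∀ b ∈ T, Commute a b) {g : G} (hg : g ∈ closure (S ∪ T)) :
    ∃ b ∈ closure S, ∃ c ∈ closure T, b * c = g := by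
  have hS : closure S ≤ normalizer (closure T : Set G) := by
    refine le_trans ?_ (centralizer_le_normalizer _)
    rw [centralizer_closure, closure_le]
    exact fun a ha => mem_centralizer_iff.2 fun b hb => (hST a ha b hb).symm.eq
  rwa [closure_union, ← SetLike.mem_coe, coe_mul_of_left_le_normalizer_right _ _ hS] at hg

theorem Subgroup.closure_image_inter_le_inf {G ι : Type*} [Group G] (ρ : ι → G) (I J : Set ι) :
    closure (ρ '' (I ∩ J)) ≤ closure (ρ '' I) ⊓ closure (ρ '' J) :=
  le_inf (closure_mono (Set.image_mono Set.inter_subset_left))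
    (closure_mono (Set.image_mono Set.inter_subset_right))

section InitialSegment

variable {ι : Type*}

def initialSegment [Preorder ι] (I : Set ι) : Set ι :=
  {i | Set.Iic i ⊆ I}

theorem initialSegment_subset [Preorder ι] (I : Set ι) : initialSegment I ⊆ I :=
  fun _ hi => hi le_rfl

theorem isLowerSet_initialSegment [Preorder ι] (I : Set ι) : IsLowerSet (initialSegment I) :=
  fun _ _ hba ha => (Set.Iic_subset_Iic.2 hba).trans ha

theorem initialSegment_total [LinearOrder ι] (I J : Set ι) :
    initialSegment I ⊆ initialSegment J ∨ initialSegment J ⊆ initialSegment I :=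
  (isLowerSet_initialSegment I).total (isLowerSet_initialSegment J)

theorem exists_notMem_between_of_mem_diff_initialSegment [LinearOrder ι] {I : Set ι} {i j : ι}
    (hi : i ∈ initialSegment I) (hj : j ∈ I \ initialSegment I) : ∃ k ∉ I, i < k ∧ k < j := by
  obtain ⟨k, hkj, hkI⟩ := Set.not_subset.1 hj.2
  refine ⟨k, hkI, lt_of_not_ge fun hki => hkI (hi hki), ?_⟩
  exact lt_of_le_of_ne hkj fun hk => hkI (hk ▸ hj.1)

end InitialSegment

namespace Fin

variable {n : ℕ}

theorem add_two_le_of_mem_diff_initialSegment {I : Set (Fin n)} {i j : Fin n}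
    (hi : i ∈ initialSegment I) (hj : j ∈ I \ initialSegment I) : (i : ℕ) + 2 ≤ j := by
  obtain ⟨k, -, hik, hkj⟩ := exists_notMem_between_of_mem_diff_initialSegment hi hj
  rw [Fin.lt_def] at hik hkj
  omega

theorem diff_initialSegment_subset (I : Set (Fin n)) :
    I \ initialSegment I ⊆ {i | (i : ℕ) ≠ 0} := by
  intro i hi hi0
  refine hi.2 fun j hj => ?_
  rw [Set.mem_Iic, Fin.le_def] at hj
  exact (Fin.ext (by omega) : j = i) ▸ hi.1

theorem eq_univ_or_initialSegment_subset (I : Set (Fin n)) :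
    I = Set.univ ∨ initialSegment I ⊆ {i | (i : ℕ) ≠ n - 1} := by
  refine or_iff_not_imp_right.2 fun h => ?_
  obtain ⟨i, hi, hlast⟩ := Set.not_subset.1 h
  refine Set.eq_univ_of_forall fun j => hi ?_
  rw [Set.mem_Iic, Fin.le_def]
  simp only [Set.mem_ofPred_eq, not_not] at hlast
  omega

end Fin

section StringGroup

variable {n : ℕ} {G : Type*} [Group G]

def IsStringFamily (ρ : Fin n → G) : Prop :=
  ∀ i j : Fin n, (i : ℕ) + 2 ≤ (j : ℕ) → Commute (ρ i) (ρ j)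

def IntersectionPropertyOn {ι : Type*} (ρ : ι → G) (A : Set ι) : Prop :=
  ∀ I J : Set ι, I ⊆ A → J ⊆ A →
    closure (ρ '' I) ⊓ closure (ρ '' J) = closure (ρ '' (I ∩ J))

variable {ρ : Fin n → G}

theorem IsStringFamily.exists_mul_eq (hρ : IsStringFamily ρ) {I : Set (Fin n)} {g : G}
    (hg : g ∈ closure (ρ '' I)) :
    ∃ b ∈ closure (ρ '' initialSegment I), ∃ c ∈ closure (ρ '' (I \ initialSegment I)),
      b * c = g := by
  refine exists_mul_eq_of_mem_closure_union ?_ ?_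
  · rintro _ ⟨i, hi, rfl⟩ _ ⟨j, hj, rfl⟩
    exact hρ i j (Fin.add_two_le_of_mem_diff_initialSegment hi hj)
  · rwa [← Set.image_union, Set.union_sdiff_cancel (initialSegment_subset I)]

theorem IsStringFamily.inf_closure_ne_zero_le (hρ : IsStringFamily ρ)
    (hlast : IntersectionPropertyOn ρ {i | (i : ℕ) ≠ n - 1})
    (hmid : closure (ρ '' {i | (i : ℕ) ≠ 0}) ⊓ closure (ρ '' {i | (i : ℕ) ≠ n - 1}) =
      closure (ρ '' ({i | (i : ℕ) ≠ 0} ∩ {i | (i : ℕ) ≠ n - 1})))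
    (J : Set (Fin n)) :
    closure (ρ '' J) ⊓ closure (ρ '' {i | (i : ℕ) ≠ 0}) ≤
      closure (ρ '' (J ∩ {i | (i : ℕ) ≠ 0})) := by
  obtain rfl | hJ := Fin.eq_univ_or_initialSegment_subset J
  · simp only [Set.univ_inter, inf_le_right]
  intro g hg
  obtain ⟨hgJ, hg₀⟩ := mem_inf.1 hg
  obtain ⟨b, hb, c, hc, rfl⟩ := hρ.exists_mul_eq hgJ
  have hc₀ := closure_mono (Set.image_mono (Fin.diff_initialSegment_subset J)) hc
  have hb₀ : b ∈ closure (ρ '' {i | (i : ℕ) ≠ 0}) := (mul_mem_cancel_right hc₀).1 hg₀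
  have hbmid := hmid ▸ mem_inf.2 ⟨hb₀, closure_mono (Set.image_mono hJ) hb⟩
  have hb' := hlast _ _ hJ Set.inter_subset_right ▸ mem_inf.2 ⟨hb, hbmid⟩
  refine mul_mem (closure_mono (Set.image_mono ?_) hb') (closure_mono (Set.image_mono ?_) hc)
  · exact fun i hi => ⟨initialSegment_subset J hi.1, hi.2.1⟩
  · exact fun i hi => ⟨hi.1, Fin.diff_initialSegment_subset J hi⟩

theorem IsStringFamily.inf_closure_le_of_subset_ne_zero (hρ : IsStringFamily ρ)
    (hfirst : IntersectionPropertyOn ρ {i | (i : ℕ) ≠ 0})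
    (hlast : IntersectionPropertyOn ρ {i | (i : ℕ) ≠ n - 1})
    (hmid : closure (ρ '' {i | (i : ℕ) ≠ 0}) ⊓ closure (ρ '' {i | (i : ℕ) ≠ n - 1}) =
      closure (ρ '' ({i | (i : ℕ) ≠ 0} ∩ {i | (i : ℕ) ≠ n - 1})))
    {I : Set (Fin n)} (hI : I ⊆ {i | (i : ℕ) ≠ 0}) (J : Set (Fin n)) :
    closure (ρ '' I) ⊓ closure (ρ '' J) ≤ closure (ρ '' (I ∩ J)) := by
  intro g hg
  obtain ⟨hgI, hgJ⟩ := mem_inf.1 hg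
  have hgJ₀ := hρ.inf_closure_ne_zero_le hlast hmid J <|
    mem_inf.2 ⟨hgJ, closure_mono (Set.image_mono hI) hgI⟩
  have hg' := hfirst _ _ hI Set.inter_subset_right ▸ mem_inf.2 ⟨hgI, hgJ₀⟩
  exact closure_mono (Set.image_mono (Set.inter_subset_inter_right I Set.inter_subset_left)) hg'

theorem IsStringFamily.inf_closure_le_of_initialSegment_subset (hρ : IsStringFamily ρ)
    (hfirst : IntersectionPropertyOn ρ {i | (i : ℕ) ≠ 0})
    (hlast : IntersectionPropertyOn ρ {i | (i : ℕ) ≠ n - 1})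
    (hmid : closure (ρ '' {i | (i : ℕ) ≠ 0}) ⊓ closure (ρ '' {i | (i : ℕ) ≠ n - 1}) =
      closure (ρ '' ({i | (i : ℕ) ≠ 0} ∩ {i | (i : ℕ) ≠ n - 1})))
    {I J : Set (Fin n)} (hIJ : initialSegment I ⊆ initialSegment J) :
    closure (ρ '' I) ⊓ closure (ρ '' J) ≤ closure (ρ '' (I ∩ J)) := by
  intro g hg
  obtain ⟨hgI, hgJ⟩ := mem_inf.1 hg
  obtain ⟨b, hb, c, hc, rfl⟩ := hρ.exists_mul_eq hgI
  have hbJ := closure_mono (Set.image_mono (hIJ.trans (initialSegment_subset J))) hb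
  have hcJ : c ∈ closure (ρ '' J) := (mul_mem_cancel_left hbJ).1 hgJ
  have hc' := hρ.inf_closure_le_of_subset_ne_zero hfirst hlast hmid
    (Fin.diff_initialSegment_subset I) J (mem_inf.2 ⟨hc, hcJ⟩)
  refine mul_mem (closure_mono (Set.image_mono ?_) hb) (closure_mono (Set.image_mono ?_) hc')
  · exact fun i hi => ⟨initialSegment_subset I hi, initialSegment_subset J (hIJ hi)⟩
  · exact fun i hi => ⟨hi.1.1, hi.2⟩

end StringGroup

theorem intersection_property_iff_general (n : ℕ) (Γ : Type*) [Group Γ]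
    (ρ : Fin n → Γ)
    (hstring : ∀ i j : Fin n, (i : ℕ) + 2 ≤ (j : ℕ) → Commute (ρ i) (ρ j)) :
    (∀ I J : Set (Fin n),
        Subgroup.closure (ρ '' I) ⊓ Subgroup.closure (ρ '' J) =
          Subgroup.closure (ρ '' (I ∩ J))) ↔
      ((∀ I J : Set (Fin n), I ⊆ {i | (i : ℕ) ≠ 0} → J ⊆ {i | (i : ℕ) ≠ 0} →
          Subgroup.closure (ρ '' I) ⊓ Subgroup.closure (ρ '' J) =
            Subgroup.closure (ρ '' (I ∩ J))) ∧
       (∀ I J : Set (Fin n), I ⊆ {i | (i : ℕ) ≠ n - 1} → J ⊆ {i | (i : ℕ) ≠ n - 1} →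
          Subgroup.closure (ρ '' I) ⊓ Subgroup.closure (ρ '' J) =
            Subgroup.closure (ρ '' (I ∩ J))) ∧
       Subgroup.closure (ρ '' {i | (i : ℕ) ≠ 0}) ⊓
           Subgroup.closure (ρ '' {i | (i : ℕ) ≠ n - 1}) =
         Subgroup.closure (ρ '' {i | (i : ℕ) ≠ 0 ∧ (i : ℕ) ≠ n - 1})) := by
  refine ⟨fun h => ⟨fun I J _ _ => h I J, fun I J _ _ => h I J, h _ _⟩, ?_⟩
  rintro ⟨hfirst, hlast, hmid⟩ I J
  have hρ : IsStringFamily ρ := hstring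
  refine le_antisymm ?_ (closure_image_inter_le_inf ρ I J)
  rcases initialSegment_total I J with hIJ | hJI
  · exact hρ.inf_closure_le_of_initialSegment_subset hfirst hlast hmid hIJ
  · rw [inf_comm, Set.inter_comm]
    exact hρ.inf_closure_le_of_initialSegment_subset hfirst hlast hmid hJI

/-- A string group generated by involutions `ρ₀, …, ρ_{n-1}` satisfies the intersection
property for all pairs of subsets iff the subgroups `Γ₀ = ⟨ρ₁,…,ρ_{n-1}⟩` and
`Γ_{n-1} = ⟨ρ₀,…,ρ_{n-2}⟩` each satisfy the intersection property (for their generating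
sets) and `Γ₀ ∩ Γ_{n-1} = ⟨ρ₁,…,ρ_{n-2}⟩`. -/
theorem intersection_property_iff (n : ℕ) (hn : 1 ≤ n) (Γ : Type*) [Group Γ]
    (ρ : Fin n → Γ)
    (hgen : Subgroup.closure (Set.range ρ) = ⊤)
    (hinv : ∀ i, ρ i * ρ i = 1) (hne : ∀ i, ρ i ≠ 1)
    (hstring : ∀ i j : Fin n, (i : ℕ) + 2 ≤ (j : ℕ) → Commute (ρ i) (ρ j)) :
    (∀ I J : Set (Fin n),
        Subgroup.closure (ρ '' I) ⊓ Subgroup.closure (ρ '' J) =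
          Subgroup.closure (ρ '' (I ∩ J))) ↔
      ((∀ I J : Set (Fin n), I ⊆ {i | (i : ℕ) ≠ 0} → J ⊆ {i | (i : ℕ) ≠ 0} →
          Subgroup.closure (ρ '' I) ⊓ Subgroup.closure (ρ '' J) =
            Subgroup.closure (ρ '' (I ∩ J))) ∧
       (∀ I J : Set (Fin n), I ⊆ {i | (i : ℕ) ≠ n - 1} → J ⊆ {i | (i : ℕ) ≠ n - 1} →
          Subgroup.closure (ρ '' I) ⊓ Subgroup.closure (ρ '' J) =
            Subgroup.closure (ρ '' (I ∩ J))) ∧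
       Subgroup.closure (ρ '' {i | (i : ℕ) ≠ 0}) ⊓
           Subgroup.closure (ρ '' {i | (i : ℕ) ≠ n - 1}) =
         Subgroup.closure (ρ '' {i | (i : ℕ) ≠ 0 ∧ (i : ℕ) ≠ n - 1})) :=
  intersection_property_iff_general n Γ ρ hstring
end

section
/- Let G be a group with distinguished involutory generators r_0, ..., r_{n-1} satisfying the string C-group (intersection) property, and let C_2 = ⟨s⟩ be a cyclic group of order 2. Then the direct product G × C_2, with generators r_0, ..., r_{n-1} (each paired with identity) and (1, s), is again a string C-group of rank n+1. -/
/-!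
Every generator `r' i` lies in one of the two factors, so the subgroup generated by any subset
`I` of the generators is itself a product: its `G`-part is generated by the old generators indexed
by `I`, and its `C₂`-part is `⟨s⟩` or trivial according as the last index lies in `I`. Intersections
of product subgroups are computed factorwise, so the intersection property for `G × C₂` reduces to
that of `G` and a trivial check in the second factor.
-/

theorem Subgroup.prod_inf_prod {G C : Type*} [Group G] [Group C] (H₁ H₂ : Subgroup G)
    (K₁ K₂ : Subgroup C) : H₁.prod K₁ ⊓ H₂.prod K₂ = (H₁ ⊓ H₂).prod (K₁ ⊓ K₂) := by
  ext ⟨x, y⟩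
  simp only [Subgroup.mem_inf, Subgroup.mem_prod]
  tauto

namespace StringCGroup

variable {G C : Type*} [Group G] [Group C] {n : ℕ} {r : Fin n → G} {s : C}
  {r' : Fin (n + 1) → G × C}

open Classical in
theorem closure_image_eq_prod (hr' : ∀ i : Fin n, r' i.castSucc = (r i, 1))
    (hlast : r' (Fin.last n) = (1, s)) (I : Set (Fin (n + 1))) :
    Subgroup.closure (r' '' I) =
      (Subgroup.closure (r '' (Fin.castSucc ⁻¹' I))).prod
        (if Fin.last n ∈ I then Subgroup.zpowers s else ⊥) := by
  apply le_antisymm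
  · rw [Subgroup.closure_le]
    rintro _ ⟨i, hi, rfl⟩
    induction i using Fin.lastCases with
    | last => rw [hlast, if_pos hi]; exact ⟨one_mem _, Subgroup.mem_zpowers s⟩
    | cast j => rw [hr']; exact ⟨Subgroup.subset_closure ⟨j, hi, rfl⟩, one_mem _⟩
  · rw [Subgroup.prod_le_iff, MonoidHom.map_closure, Subgroup.closure_le]
    refine ⟨?_, ?_⟩
    · rintro _ ⟨_, ⟨j, hj, rfl⟩, rfl⟩
      exact Subgroup.subset_closure ⟨j.castSucc, hj, hr' j⟩
    · split_ifs with h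
      · rw [MonoidHom.map_zpowers, Subgroup.zpowers_le]
        exact Subgroup.subset_closure ⟨Fin.last n, h, hlast⟩
      · rw [Subgroup.map_bot]
        exact bot_le

theorem mul_self_eq_one (hinv : ∀ i, r i * r i = 1) (hs : s * s = 1)
    (hr' : ∀ i : Fin n, r' i.castSucc = (r i, 1)) (hlast : r' (Fin.last n) = (1, s))
    (i : Fin (n + 1)) : r' i * r' i = 1 := by
  induction i using Fin.lastCases with
  | last => rw [hlast, Prod.mk_mul_mk, one_mul, hs]; rfl
  | cast j => rw [hr', Prod.mk_mul_mk, hinv, one_mul]; rfl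

theorem commute_of_add_two_le
    (hstring : ∀ i j : Fin n, (i : ℕ) + 2 ≤ (j : ℕ) → Commute (r i) (r j))
    (hr' : ∀ i : Fin n, r' i.castSucc = (r i, 1)) (hlast : r' (Fin.last n) = (1, s))
    (i j : Fin (n + 1)) (hij : (i : ℕ) + 2 ≤ (j : ℕ)) : Commute (r' i) (r' j) := by
  induction i using Fin.lastCases with
  | last => simp only [Fin.val_last] at hij; omega
  | cast i =>
    induction j using Fin.lastCases with
    | last => rw [hr', hlast]; exact Commute.prod (Commute.one_right _) (Commute.one_left _)
    | cast j =>
      rw [hr', hr']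
      exact Commute.prod (hstring i j (by simpa using hij)) (Commute.refl 1)

theorem closure_range_eq_top (hgen : Subgroup.closure (Set.range r) = ⊤)
    (hs : Subgroup.zpowers s = ⊤) (hr' : ∀ i : Fin n, r' i.castSucc = (r i, 1))
    (hlast : r' (Fin.last n) = (1, s)) : Subgroup.closure (Set.range r') = ⊤ := by
  rw [← Set.image_univ, closure_image_eq_prod hr' hlast, Set.preimage_univ, Set.image_univ, hgen,
    if_pos (Set.mem_univ _), hs, Subgroup.top_prod_top]

theorem closure_image_inf_closure_image
    (hIP : ∀ I J : Set (Fin n),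
      Subgroup.closure (r '' I) ⊓ Subgroup.closure (r '' J) = Subgroup.closure (r '' (I ∩ J)))
    (hr' : ∀ i : Fin n, r' i.castSucc = (r i, 1)) (hlast : r' (Fin.last n) = (1, s))
    (I J : Set (Fin (n + 1))) :
    Subgroup.closure (r' '' I) ⊓ Subgroup.closure (r' '' J) =
      Subgroup.closure (r' '' (I ∩ J)) := by
  simp only [closure_image_eq_prod hr' hlast, Subgroup.prod_inf_prod, Set.preimage_inter, hIP,
    Set.mem_inter_iff]
  congr 1
  split_ifs <;> simp_all

end StringCGroup

theorem zpowers_ofAdd_one_zmod_two : Subgroup.zpowers (Multiplicative.ofAdd (1 : ZMod 2)) = ⊤ := by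
  apply Subgroup.eq_top_of_card_eq
  rw [Nat.card_zpowers, orderOf_ofAdd_eq_addOrderOf, ZMod.addOrderOf_one, Nat.card_eq_fintype_card]
  rfl

/-- If `G` with involutory generators `r₀,…,r_{n-1}` is a string C-group, then the direct
product `G × C₂`, with the generators `(rᵢ, 1)` together with the new last generator
`(1, s)` where `s` generates `C₂`, is again a string C-group of rank `n+1`. -/
theorem string_C_group_times_C2 (n : ℕ) (G : Type*) [Group G] (r : Fin n → G)
    (hgen : Subgroup.closure (Set.range r) = ⊤)
    (hinv : ∀ i, r i * r i = 1)
    (hstring : ∀ i j : Fin n, (i : ℕ) + 2 ≤ (j : ℕ) → Commute (r i) (r j))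
    (hIP : ∀ I J : Set (Fin n),
      Subgroup.closure (r '' I) ⊓ Subgroup.closure (r '' J) =
        Subgroup.closure (r '' (I ∩ J)))
    (r' : Fin (n + 1) → G × Multiplicative (ZMod 2))
    (hr' : ∀ i : Fin n, r' i.castSucc = (r i, 1))
    (hlast : r' (Fin.last n) = (1, Multiplicative.ofAdd 1)) :
    (∀ i, r' i * r' i = 1) ∧
    (∀ i j : Fin (n + 1), (i : ℕ) + 2 ≤ (j : ℕ) → Commute (r' i) (r' j)) ∧
    Subgroup.closure (Set.range r') = ⊤ ∧
    (∀ I J : Set (Fin (n + 1)),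
      Subgroup.closure (r' '' I) ⊓ Subgroup.closure (r' '' J) =
        Subgroup.closure (r' '' (I ∩ J))) :=
  ⟨StringCGroup.mul_self_eq_one hinv rfl hr' hlast,
    StringCGroup.commute_of_add_two_le hstring hr' hlast,
    StringCGroup.closure_range_eq_top hgen zpowers_ofAdd_one_zmod_two hr' hlast,
    StringCGroup.closure_image_inf_closure_image hIP hr' hlast⟩
end

section
/- Let V be a singular 2-dimensional quadratic space over Z_p (p odd) with 1-dimensional radical, in which the square norm b·b of every anisotropic vector b is a nonzero square in Z_p. Then Ô_1(V) = Ô(V), i.e., every isometry of V acting trivially on rad V is a product of reflections with roots of square norm, and this group is dihedral of order 2p. -/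
/-!
Normalize the plane: the square-norm hypothesis gives `e` with `B e e = 1`, and `f` spans the
radical. An isometry fixing `f` is determined by `e ↦ ε • e + t • f`, and preserving the norm of
`e` forces `ε = ±1`; composing these maps multiplies the `ε` and composes the shifts affinely,
which is the multiplication of the dihedral group of order `2p` (rotations `r t` for `ε = 1`,
reflections `sr t` for `ε = -1`). Each `sr t` is the reflection in the norm-one vector
`e - (t / 2) • f`, and `r t = sr 0 * sr t`, so reflections with square norm generate.
-/

open LinearMap (BilinForm)

namespace LinearMap.BilinForm

section Shear

variable {R V : Type*} [CommRing R] [AddCommGroup V] [Module R V] (B : BilinForm R V) (e f : V)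

/-- When `B e e = 1` and `f` lies in the radical, this is `e ↦ ε • e + t • f`, `f ↦ f`. -/
def shear (ε t : R) : V →ₗ[R] V :=
  LinearMap.id + (B e).smulRight ((ε - 1) • e + t • f)

variable {B e f}

@[simp]
lemma shear_apply (ε t : R) (v : V) :
    shear B e f ε t v = v + B e v • ((ε - 1) • e + t • f) := by
  simp [shear]

lemma shear_comp_shear (hee : B e e = 1) (hef : B e f = 0) (ε t ε' t' : R) :
    shear B e f ε t ∘ₗ shear B e f ε' t' = shear B e f (ε * ε') (ε' * t + t') := by
  ext v
  simp only [LinearMap.comp_apply, shear_apply, map_add, map_smul, hee, hef]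
  module

lemma shear_one_zero : shear B e f 1 0 = LinearMap.id := by
  ext v
  simp

lemma shear_apply_left (hee : B e e = 1) (ε t : R) : shear B e f ε t e = ε • e + t • f := by
  rw [shear_apply, hee]
  module

lemma shear_apply_right (hef : B e f = 0) (ε t : R) : shear B e f ε t f = f := by
  simp [hef]

lemma shear_apply_of_mem_orthogonal {v : V} (hv : v ∈ B.orthogonal ⊤) (ε t : R) :
    shear B e f ε t v = v := by
  simp [(mem_orthogonal_iff.mp hv) e trivial]

lemma shear_isometry (hB : B.IsSymm) (hee : B e e = 1) (hf : ∀ v, B v f = 0) {ε : R}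
    (hε : ε * ε = 1) (t : R) (x y : V) : B (shear B e f ε t x) (shear B e f ε t y) = B x y := by
  simp only [shear_apply, map_add, map_smul, LinearMap.add_apply, LinearMap.smul_apply,
    smul_eq_mul, hee, hf, hB.eq f, hB.eq x e]
  linear_combination (B e x * B e y) * hε

lemma eq_shear_of_isometry (hB : B.IsSymm) (hee : B e e = 1) (hf : ∀ v, B v f = 0)
    (hspan : Submodule.span R {e, f} = ⊤) {g : V →ₗ[R] V} (hg : ∀ x y, B (g x) (g y) = B x y)
    (hgf : g f = f) : ∃ ε t, ε * ε = 1 ∧ g = shear B e f ε t := by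
  obtain ⟨ε, t, hge⟩ := Submodule.mem_span_pair.mp (hspan ▸ Submodule.mem_top : g e ∈ _)
  have hε : ε * ε = 1 := by
    have := hg e e
    simp only [← hge, map_add, map_smul, LinearMap.add_apply, LinearMap.smul_apply, smul_eq_mul,
      hee, hf, hB.eq f] at this
    linear_combination this
  refine ⟨ε, t, hε, LinearMap.ext_on hspan ?_⟩
  simp only [Set.EqOn, Set.mem_insert_iff, Set.mem_singleton_iff, forall_eq_or_imp, forall_eq]
  exact ⟨by rw [shear_apply_left hee, hge], by rw [shear_apply_right (hf e), hgf]⟩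

end Shear

section Reflection

variable {K V : Type*} [Field K] [AddCommGroup V] [Module K V] {B : BilinForm K V}

lemma reflection_isometry (hB : B.IsSymm) {a : V} (ha : B a a ≠ 0) (x y : V) :
    B (x - (2 * B x a * (B a a)⁻¹) • a) (y - (2 * B y a * (B a a)⁻¹) • a) = B x y := by
  simp only [map_sub, map_smul, LinearMap.sub_apply, LinearMap.smul_apply, smul_eq_mul,
    hB.eq a y]
  field_simp
  ring

lemma reflection_apply_of_mem_orthogonal (hB : B.IsSymm) {a x : V} (hx : x ∈ B.orthogonal ⊤) :
    x - (2 * B x a * (B a a)⁻¹) • a = x := by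
  simp [hB.eq x a, (mem_orthogonal_iff.mp hx) a trivial]

lemma shear_neg_one_eq_reflection (hB : B.IsSymm) {e f : V} (hee : B e e = 1)
    (hf : ∀ v, B v f = 0) (c : K) (x : V) :
    shear B e f (-1) (-(2 * c)) x =
      x - (2 * B x (e + c • f) * (B (e + c • f) (e + c • f))⁻¹) • (e + c • f) := by
  simp only [shear_apply, map_add, map_smul, LinearMap.add_apply, LinearMap.smul_apply,
    smul_eq_mul, hee, hf, hB.eq f, hB.eq x e]
  module

end Reflection

def squareNormReflections {K V : Type*} [Field K] [AddCommGroup V] [Module K V]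
    (B : BilinForm K V) : Set (V ≃ₗ[K] V) :=
  {g | ∃ a, B a a ≠ 0 ∧ IsSquare (B a a) ∧ ∀ x, g x = x - (2 * B x a * (B a a)⁻¹) • a}

lemma squareNormReflections_subset {K V : Type*} [Field K] [AddCommGroup V] [Module K V]
    {B : BilinForm K V} (hB : B.IsSymm) :
    squareNormReflections B ⊆
      {g | (∀ x y, B (g x) (g y) = B x y) ∧ ∀ x ∈ B.orthogonal ⊤, g x = x} := by
  rintro g ⟨a, ha, -, hg⟩
  exact ⟨fun x y ↦ by rw [hg, hg, reflection_isometry hB ha],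
    fun x hx ↦ by rw [hg, reflection_apply_of_mem_orthogonal hB hx]⟩

section Dihedral

variable {p : ℕ} [Fact p.Prime] {V : Type*} [AddCommGroup V] [Module (ZMod p) V]
  {B : BilinForm (ZMod p) V} {e f : V}

def dihedralToEnd (hee : B e e = 1) (hef : B e f = 0) :
    DihedralGroup p →* Module.End (ZMod p) V where
  toFun
    | .r i => shear B e f 1 i
    | .sr i => shear B e f (-1) i
  map_one' := shear_one_zero
  map_mul' := by
    rintro (i | i) (j | j) <;>
      simp only [DihedralGroup.r_mul_r, DihedralGroup.r_mul_sr, DihedralGroup.sr_mul_r,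
        DihedralGroup.sr_mul_sr, Module.End.mul_eq_comp, shear_comp_shear hee hef] <;>
      congr 1 <;> ring

def dihedralRep (hee : B e e = 1) (hef : B e f = 0) : DihedralGroup p →* (V ≃ₗ[ZMod p] V) :=
  (LinearMap.GeneralLinearGroup.generalLinearEquiv _ _).toMonoidHom.comp
    (dihedralToEnd hee hef).toHomUnits

lemma dihedralRep_r (hee : B e e = 1) (hef : B e f = 0) (i : ZMod p) :
    ⇑(dihedralRep hee hef (.r i)) = shear B e f 1 i := rfl

lemma dihedralRep_sr (hee : B e e = 1) (hef : B e f = 0) (i : ZMod p) :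
    ⇑(dihedralRep hee hef (.sr i)) = shear B e f (-1) i := rfl

lemma dihedralRep_injective (h2 : (2 : ZMod p) ≠ 0) (hee : B e e = 1) (hef : B e f = 0)
    (hf0 : f ≠ 0) : Function.Injective (dihedralRep hee hef) := by
  rw [injective_iff_map_eq_one]
  rintro (i | i) h <;> have he := congr($h e) <;>
    simp only [dihedralRep_r, dihedralRep_sr, shear_apply_left hee, LinearEquiv.coe_one,
      id_eq] at he
  · rw [one_smul, add_eq_left, smul_eq_zero] at he
    rw [DihedralGroup.one_def, he.resolve_right hf0]
  · have h := congr(B e $he)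
    simp only [map_add, map_smul, smul_eq_mul, hee, hef] at h
    exact absurd (by linear_combination -h) h2

lemma mem_range_dihedralRep_iff (hB : B.IsSymm) (hee : B e e = 1) (hf : ∀ v, B v f = 0)
    (hspan : Submodule.span (ZMod p) {e, f} = ⊤) (g : V ≃ₗ[ZMod p] V) :
    g ∈ (dihedralRep hee (hf e)).range ↔
      (∀ x y, B (g x) (g y) = B x y) ∧ ∀ x ∈ B.orthogonal ⊤, g x = x := by
  constructor
  · rintro ⟨i | i, rfl⟩
    · exact ⟨shear_isometry hB hee hf (mul_one 1) i,
        fun x hx ↦ shear_apply_of_mem_orthogonal hx 1 i⟩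
    · exact ⟨shear_isometry hB hee hf (by ring) i,
        fun x hx ↦ shear_apply_of_mem_orthogonal hx (-1) i⟩
  · rintro ⟨hg, hrad⟩
    obtain ⟨ε, t, hε, hgε⟩ := eq_shear_of_isometry hB hee hf hspan (g := g.toLinearMap) hg
      (hrad f (mem_orthogonal_iff.mpr fun v _ ↦ hf v))
    rcases mul_self_eq_one_iff.mp hε with rfl | rfl
    · exact ⟨.r t, LinearEquiv.ext fun v ↦ (LinearMap.congr_fun hgε v).symm⟩
    · exact ⟨.sr t, LinearEquiv.ext fun v ↦ (LinearMap.congr_fun hgε v).symm⟩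

lemma range_dihedralRep_le_closure_squareNormReflections (h2 : (2 : ZMod p) ≠ 0)
    (hB : B.IsSymm) (hee : B e e = 1) (hf : ∀ v, B v f = 0) :
    (dihedralRep hee (hf e)).range ≤ Subgroup.closure (squareNormReflections B) := by
  have hsr (i : ZMod p) : dihedralRep hee (hf e) (.sr i) ∈ squareNormReflections B := by
    refine ⟨e + (-(i / 2)) • f, ?_⟩
    have hnorm : B (e + (-(i / 2)) • f) (e + (-(i / 2)) • f) = 1 := by
      simp [hee, hf, hB.eq f]
    refine ⟨hnorm ▸ one_ne_zero, hnorm ▸ IsSquare.one, fun x ↦ ?_⟩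
    rw [← shear_neg_one_eq_reflection hB hee hf, dihedralRep_sr]
    congr
    field_simp
  rintro _ ⟨i | i, rfl⟩
  · rw [show DihedralGroup.r i = .sr 0 * .sr i by simp, map_mul]
    exact mul_mem (Subgroup.subset_closure (hsr 0)) (Subgroup.subset_closure (hsr i))
  · exact Subgroup.subset_closure (hsr i)

end Dihedral

section AdaptedBasis

variable {K V : Type*} [Field K] [AddCommGroup V] [Module K V] {B : BilinForm K V}

lemma exists_self_eq_one (h2 : (2 : K) ≠ 0) (hB : B.IsSymm) (hB0 : B ≠ 0)
    (hsq : ∀ b, B b b ≠ 0 → IsSquare (B b b)) : ∃ e, B e e = 1 := by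
  let := invertibleOfNonzero h2
  obtain ⟨e, he⟩ := exists_bilinForm_self_ne_zero hB0 (isSymm_iff.mp hB)
  obtain ⟨s, hs⟩ := hsq e he
  have hs0 : s ≠ 0 := by rintro rfl; exact he (by simpa using hs)
  refine ⟨s⁻¹ • e, ?_⟩
  simp only [map_smul, LinearMap.smul_apply, smul_eq_mul, hs]
  field_simp

lemma span_pair_eq_top (hdim : Module.finrank K V = 2) {e f : V} (hee : B e e = 1)
    (hf : ∀ v, B v f = 0) (hf0 : f ≠ 0) : Submodule.span K {e, f} = ⊤ := by
  have hli : LinearIndependent K ![f, e] := by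
    refine (LinearIndependent.pair_iff' hf0).mpr fun a ha ↦ ?_
    simp [← ha, hf] at hee
  rw [Set.pair_comm, ← Matrix.range_cons_cons_empty f e ![]]
  exact hli.span_eq_top_of_card_eq_finrank (by simp [hdim])

lemma exists_adapted_basis (h2 : (2 : K) ≠ 0) (hB : B.IsSymm) (hdim : Module.finrank K V = 2)
    (hrad : Module.finrank K (B.orthogonal ⊤) = 1) (hsq : ∀ b, B b b ≠ 0 → IsSquare (B b b)) :
    ∃ e f, B e e = 1 ∧ f ≠ 0 ∧ (∀ v, B v f = 0) ∧ Submodule.span K {e, f} = ⊤ := by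
  have hB0 : B ≠ 0 := by
    rintro rfl
    have : (0 : BilinForm K V).orthogonal ⊤ = ⊤ :=
      Submodule.eq_top_iff'.mpr fun x ↦ mem_orthogonal_iff.mpr fun _ _ ↦ rfl
    rw [this, finrank_top, hdim] at hrad
    exact absurd hrad (by norm_num)
  have hrad0 : B.orthogonal ⊤ ≠ ⊥ := by
    rintro h
    rw [h, finrank_bot] at hrad
    exact absurd hrad (by norm_num)
  obtain ⟨e, hee⟩ := exists_self_eq_one h2 hB hB0 hsq
  obtain ⟨f, hfrad, hf0⟩ := Submodule.exists_mem_ne_zero_of_ne_bot hrad0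
  have hf (v : V) : B v f = 0 := mem_orthogonal_iff.mp hfrad v trivial
  exact ⟨e, f, hee, hf0, hf, span_pair_eq_top hdim hee hf hf0⟩

end AdaptedBasis

end LinearMap.BilinForm

open LinearMap.BilinForm in
theorem Ohat_one_eq_Ohat_general (p : ℕ) [hp : Fact p.Prime] (hodd : p ≠ 2)
    (V : Type*) [AddCommGroup V] [Module (ZMod p) V]
    (hdim : Module.finrank (ZMod p) V = 2)
    (B : V →ₗ[ZMod p] V →ₗ[ZMod p] ZMod p) (hsymm : ∀ x y, B x y = B y x)
    (hrad1 : Module.finrank (ZMod p) (LinearMap.BilinForm.orthogonal B ⊤) = 1)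
    (hsq : ∀ b : V, B b b ≠ 0 → IsSquare (B b b))
    (Ohat : Subgroup (V ≃ₗ[ZMod p] V))
    (hOhat : ∀ g, g ∈ Ohat ↔ ((∀ x y, B (g x) (g y) = B x y) ∧
      ∀ x ∈ LinearMap.BilinForm.orthogonal B ⊤, g x = x))
    (Ohat1 : Subgroup (V ≃ₗ[ZMod p] V))
    (hOhat1 : Ohat1 = Subgroup.closure {g | ∃ a, B a a ≠ 0 ∧ IsSquare (B a a) ∧
      ∀ x, g x = x - (2 * B x a * (B a a)⁻¹) • a}) :
    Ohat1 = Ohat ∧ Nonempty (Ohat ≃* DihedralGroup p) := by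
  have hB : IsSymm B := ⟨hsymm⟩
  have h2 : (2 : ZMod p) ≠ 0 := Ring.two_ne_zero (by rwa [ZMod.ringChar_zmod_n])
  obtain ⟨e, f, hee, hf0, hf, hspan⟩ := exists_adapted_basis h2 hB hdim hrad1 hsq
  have hrange : (dihedralRep hee (hf e)).range = Ohat := by
    ext g
    rw [hOhat, mem_range_dihedralRep_iff hB hee hf hspan]
  refine ⟨le_antisymm ?_ ?_, ⟨(MonoidHom.ofInjective (dihedralRep_injective h2 hee (hf e) hf0)
    |>.trans (MulEquiv.subgroupCongr hrange)).symm⟩⟩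
  · rw [hOhat1, Subgroup.closure_le]
    exact fun g hg ↦ (hOhat g).mpr (squareNormReflections_subset hB hg)
  · rw [hOhat1, ← hrange]
    exact range_dihedralRep_le_closure_squareNormReflections h2 hB hee hf

/-- For a singular plane over `ZMod p` with 1-dimensional radical in which every
anisotropic vector has square norm, `Ô₁(V) = Ô(V)`: every isometry fixing the radical
pointwise is a product of reflections with square-norm roots, and this group is dihedral
of order `2p`. -/
theorem Ohat_one_eq_Ohat (p : ℕ) [hp : Fact p.Prime] (hodd : p ≠ 2)
    (V : Type*) [AddCommGroup V] [Module (ZMod p) V] [FiniteDimensional (ZMod p) V]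
    (hdim : Module.finrank (ZMod p) V = 2)
    (B : V →ₗ[ZMod p] V →ₗ[ZMod p] ZMod p) (hsymm : ∀ x y, B x y = B y x)
    (hrad1 : Module.finrank (ZMod p) (LinearMap.BilinForm.orthogonal B ⊤) = 1)
    (hsq : ∀ b : V, B b b ≠ 0 → IsSquare (B b b))
    (Ohat : Subgroup (V ≃ₗ[ZMod p] V))
    (hOhat : ∀ g, g ∈ Ohat ↔ ((∀ x y, B (g x) (g y) = B x y) ∧
      ∀ x ∈ LinearMap.BilinForm.orthogonal B ⊤, g x = x))
    (Ohat1 : Subgroup (V ≃ₗ[ZMod p] V))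
    (hOhat1 : Ohat1 = Subgroup.closure {g | ∃ a, B a a ≠ 0 ∧ IsSquare (B a a) ∧
      ∀ x, g x = x - (2 * B x a * (B a a)⁻¹) • a}) :
    Ohat1 = Ohat ∧ Nonempty (Ohat ≃* DihedralGroup p) :=
  Ohat_one_eq_Ohat_general p (hp := hp) hodd V hdim B hsymm hrad1 hsq Ohat hOhat Ohat1 hOhat1
end
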